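/- arXiv:1007.2754 — 13 statements merged into one kernel-verified Lean document; each statement's English description precedes it below -/
import Mathlib

section
/- Let h be a relational hidden-variable model. Then h satisfies Strong Determinism if and only if h satisfies both Weak Determinism and Parameter Independence. -/
namespace RelationalHVModel

variable {ι Λ : Type*} {M O : ι → Type*}

def StrongDeterminism (h : (∀ i, M i) → (∀ i, O i) → Λ → Prop) : Prop :=
  ∀ (i : ι) (m m' : ∀ j, M j) (o o' : ∀ j, O j) (l : Λ),
    h m o l → h m' o' l → m i = m' i → o i = o' i

def WeakDeterminism (h : (∀ i, M i) → (∀ i, O i) → Λ → Prop) : Prop :=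
  ∀ (m : ∀ j, M j) (o o' : ∀ j, O j) (l : Λ), h m o l → h m o' l → o = o'

def ParameterIndependence (h : (∀ i, M i) → (∀ i, O i) → Λ → Prop) : Prop :=
  ∀ (i : ι) (m m' : ∀ j, M j), m i = m' i → ∀ (o : O i) (l : Λ),
    (∃ ob : ∀ j, O j, ob i = o ∧ h m ob l) →
    (∃ ob : ∀ j, O j, h m' ob l) →
    ∃ ob : ∀ j, O j, ob i = o ∧ h m' ob l

variable {h : (∀ i, M i) → (∀ i, O i) → Λ → Prop}

theorem StrongDeterminism.weakDeterminism (hSD : StrongDeterminism h) : WeakDeterminism h :=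
  fun m o o' l hmo hmo' => funext fun i => hSD i m m o o' l hmo hmo' rfl

theorem StrongDeterminism.parameterIndependence (hSD : StrongDeterminism h) :
    ParameterIndependence h := by
  rintro i m m' hm o l ⟨ob, rfl, hob⟩ ⟨ob', hob'⟩
  exact ⟨ob', (hSD i m m' ob ob' l hob hob' hm).symm, hob'⟩

-- PI moves the outcome `o i` over to an outcome of `m'`, which WD identifies with `o'`.
theorem WeakDeterminism.strongDeterminism (hWD : WeakDeterminism h)
    (hPI : ParameterIndependence h) : StrongDeterminism h := by
  intro i m m' o o' l hmo hmo' hm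
  obtain ⟨ob, hobi, hob⟩ := hPI i m m' hm (o i) l ⟨o, rfl, hmo⟩ ⟨o', hmo'⟩
  rw [← hobi, hWD m' ob o' l hob hmo']

theorem strongDeterminism_iff :
    StrongDeterminism h ↔ WeakDeterminism h ∧ ParameterIndependence h :=
  ⟨fun hSD => ⟨hSD.weakDeterminism, hSD.parameterIndependence⟩,
    fun ⟨hWD, hPI⟩ => hWD.strongDeterminism hPI⟩

end RelationalHVModel

theorem stmt_1_general {n : ℕ} (M O : Fin n → Type) (Λ : Type)
    (h : (∀ i, M i) → (∀ i, O i) → Λ → Prop) :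
    -- Strong Determinism
    (∀ (i : Fin n) (m m' : ∀ j, M j) (o o' : ∀ j, O j) (l : Λ),
        h m o l → h m' o' l → m i = m' i → o i = o' i)
    ↔
    -- Weak Determinism
    ((∀ (m : ∀ j, M j) (o o' : ∀ j, O j) (l : Λ),
        h m o l → h m o' l → o = o') ∧
     -- Parameter Independence
     (∀ (i : Fin n) (m m' : ∀ j, M j), m i = m' i → ∀ (o : O i) (l : Λ),
        (∃ ob : ∀ j, O j, ob i = o ∧ h m ob l) →
        (∃ ob : ∀ j, O j, h m' ob l) →
        ∃ ob : ∀ j, O j, ob i = o ∧ h m' ob l)) :=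
  RelationalHVModel.strongDeterminism_iff

/-- Strong Determinism is equivalent to the conjunction of Weak Determinism
and Parameter Independence. -/
theorem stmt_1 {n : ℕ} (hn : 1 ≤ n) (M O : Fin n → Type) (Λ : Type)
    (h : (∀ i, M i) → (∀ i, O i) → Λ → Prop) :
    -- Strong Determinism
    (∀ (i : Fin n) (m m' : ∀ j, M j) (o o' : ∀ j, O j) (l : Λ),
        h m o l → h m' o' l → m i = m' i → o i = o' i)
    ↔
    -- Weak Determinism
    ((∀ (m : ∀ j, M j) (o o' : ∀ j, O j) (l : Λ),
        h m o l → h m o' l → o = o') ∧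
     -- Parameter Independence
     (∀ (i : Fin n) (m m' : ∀ j, M j), m i = m' i → ∀ (o : O i) (l : Λ),
        (∃ ob : ∀ j, O j, ob i = o ∧ h m ob l) →
        (∃ ob : ∀ j, O j, h m' ob l) →
        ∃ ob : ∀ j, O j, ob i = o ∧ h m' ob l)) :=
  stmt_1_general M O Λ h
end

section
/- Let h be a relational hidden-variable model. Then h satisfies Locality if and only if h satisfies both Parameter Independence and Outcome Independence. -/
/-!
Locality asks that an outcome tuple be possible as soon as the measurement tuple is possible and
each single outcome is. Parameter Independence lets each single outcome be transported to another
measurement tuple sharing that coordinate, so all the single outcomes become possible for the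
same measurement tuple; Outcome Independence then glues them, one coordinate at a time, into the
full outcome tuple. Conversely, both properties are instances of Locality applied to a tuple
obtained by changing one coordinate of a possible outcome tuple.
-/

open Function

section UpdateClosed

variable {ι : Type*} {O : ι → Type*} [DecidableEq ι]

theorem piecewise_of_update_closed {p : (∀ i, O i) → Prop}
    (hp : ∀ o o', p o → p o' → ∀ i, p (update o' i (o i))) {o₀ : ∀ i, O i} (h₀ : p o₀)
    (F : ι → ∀ i, O i) (hF : ∀ i, p (F i)) (s : Finset ι) :
    p (s.piecewise (fun i => F i i) o₀) := by
  induction s using Finset.induction_on with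
  | empty => simpa using h₀
  | insert i s _ ih =>
    rw [Finset.piecewise_insert]
    exact hp _ _ (hF i) ih i

theorem diag_of_update_closed [Fintype ι] {p : (∀ i, O i) → Prop}
    (hp : ∀ o o', p o → p o' → ∀ i, p (update o' i (o i))) {o₀ : ∀ i, O i} (h₀ : p o₀)
    (F : ι → ∀ i, O i) (hF : ∀ i, p (F i)) :
    p (fun i => F i i) := by
  simpa using piecewise_of_update_closed hp h₀ F hF Finset.univ

end UpdateClosed

namespace HiddenVariableModel

variable {ι Λ : Type*} {M O : ι → Type*}

def IsLocal (h : (∀ i, M i) → (∀ i, O i) → Λ → Prop) : Prop :=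
  ∀ (m : ∀ j, M j) (o : ∀ j, O j) (l : Λ),
    (∃ ob : ∀ j, O j, h m ob l) →
    (∀ i, ∃ (m' : ∀ j, M j) (o' : ∀ j, O j), m' i = m i ∧ o' i = o i ∧ h m' o' l) →
    h m o l

def ParamIndep (h : (∀ i, M i) → (∀ i, O i) → Λ → Prop) : Prop :=
  ∀ (i : ι) (m m' : ∀ j, M j), m i = m' i → ∀ (o : O i) (l : Λ),
    (∃ ob : ∀ j, O j, ob i = o ∧ h m ob l) →
    (∃ ob : ∀ j, O j, h m' ob l) →
    ∃ ob : ∀ j, O j, ob i = o ∧ h m' ob l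

def OutcomeIndep [DecidableEq ι] (h : (∀ i, M i) → (∀ i, O i) → Λ → Prop) : Prop :=
  ∀ (m : ∀ j, M j) (i : ι) (o o' : ∀ j, O j) (l : Λ),
    h m o l → h m o' l → h m (update o' i (o i)) l

variable {h : (∀ i, M i) → (∀ i, O i) → Λ → Prop}

theorem IsLocal.apply_update [DecidableEq ι] {m m' : ∀ j, M j} {o o' : ∀ j, O j} {l : Λ} {i : ι}
    (hL : IsLocal h) (hm : m i = m' i) (ho : h m o l) (ho' : h m' o' l) :
    h m' (update o' i (o i)) l := by
  refine hL m' _ l ⟨o', ho'⟩ fun j => ?_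
  by_cases hji : j = i
  · subst hji
    exact ⟨m, o, hm, by simp, ho⟩
  · exact ⟨m', o', rfl, by simp [hji], ho'⟩

theorem IsLocal.paramIndep (hL : IsLocal h) : ParamIndep h := by
  classical
  rintro i m m' hm o l ⟨ob, rfl, hob⟩ ⟨ob', hob'⟩
  exact ⟨update ob' i (ob i), by simp, hL.apply_update hm hob hob'⟩

theorem IsLocal.outcomeIndep [DecidableEq ι] (hL : IsLocal h) : OutcomeIndep h :=
  fun _ _ _ _ _ ho ho' => hL.apply_update rfl ho ho'

theorem isLocal_of_paramIndep_of_outcomeIndep [Fintype ι] [DecidableEq ι] (hPI : ParamIndep h)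
    (hOI : OutcomeIndep h) : IsLocal h := by
  rintro m o l ⟨ob, hob⟩ hsingle
  have hcoord : ∀ i, ∃ oi : ∀ j, O j, oi i = o i ∧ h m oi l := fun i => by
    obtain ⟨m', o', hm', ho', hmo'⟩ := hsingle i
    exact hPI i m' m hm' (o i) l ⟨o', ho', hmo'⟩ ⟨ob, hob⟩
  choose F hFo hF using hcoord
  have hdiag : (fun i => F i i) = o := funext hFo
  exact hdiag ▸ diag_of_update_closed (fun o o' ho ho' i => hOI m i o o' l ho ho') hob F hF

theorem isLocal_iff [Fintype ι] [DecidableEq ι] : IsLocal h ↔ ParamIndep h ∧ OutcomeIndep h :=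
  ⟨fun hL => ⟨hL.paramIndep, hL.outcomeIndep⟩,
    fun ⟨hPI, hOI⟩ => isLocal_of_paramIndep_of_outcomeIndep hPI hOI⟩

end HiddenVariableModel

theorem stmt_2_general {n : ℕ} (M O : Fin n → Type) (Λ : Type)
    (h : (∀ i, M i) → (∀ i, O i) → Λ → Prop) :
    -- Locality
    (∀ (m : ∀ j, M j) (o : ∀ j, O j) (l : Λ),
        (∃ ob : ∀ j, O j, h m ob l) →
        (∀ i : Fin n, ∃ (m' : ∀ j, M j) (o' : ∀ j, O j),
            m' i = m i ∧ o' i = o i ∧ h m' o' l) →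
        h m o l)
    ↔
    -- Parameter Independence
    ((∀ (i : Fin n) (m m' : ∀ j, M j), m i = m' i → ∀ (o : O i) (l : Λ),
        (∃ ob : ∀ j, O j, ob i = o ∧ h m ob l) →
        (∃ ob : ∀ j, O j, h m' ob l) →
        ∃ ob : ∀ j, O j, ob i = o ∧ h m' ob l) ∧
     -- Outcome Independence
     (∀ (m : ∀ j, M j) (i : Fin n) (o o' : ∀ j, O j) (l : Λ),
        h m o l → h m o' l → h m (Function.update o' i (o i)) l)) :=
  HiddenVariableModel.isLocal_iff

/-- Locality is equivalent to the conjunction of Parameter Independence and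
Outcome Independence. -/
theorem stmt_2 {n : ℕ} (hn : 1 ≤ n) (M O : Fin n → Type) (Λ : Type)
    (h : (∀ i, M i) → (∀ i, O i) → Λ → Prop) :
    -- Locality
    (∀ (m : ∀ j, M j) (o : ∀ j, O j) (l : Λ),
        (∃ ob : ∀ j, O j, h m ob l) →
        (∀ i : Fin n, ∃ (m' : ∀ j, M j) (o' : ∀ j, O j),
            m' i = m i ∧ o' i = o i ∧ h m' o' l) →
        h m o l)
    ↔
    -- Parameter Independence
    ((∀ (i : Fin n) (m m' : ∀ j, M j), m i = m' i → ∀ (o : O i) (l : Λ),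
        (∃ ob : ∀ j, O j, ob i = o ∧ h m ob l) →
        (∃ ob : ∀ j, O j, h m' ob l) →
        ∃ ob : ∀ j, O j, ob i = o ∧ h m' ob l) ∧
     -- Outcome Independence
     (∀ (m : ∀ j, M j) (i : Fin n) (o o' : ∀ j, O j) (l : Λ),
        h m o l → h m o' l → h m (Function.update o' i (o i)) l)) :=
  stmt_2_general M O Λ h
end

section
/- Let h be a relational hidden-variable model. If h satisfies Strong Determinism, then h satisfies Locality. -/
theorem outcome_eq_of_strongDeterminism {ι Λ : Type*} {M O : ι → Type*}
    {h : (∀ i, M i) → (∀ i, O i) → Λ → Prop}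
    (hSD : ∀ (i : ι) (m m' : ∀ j, M j) (o o' : ∀ j, O j) (l : Λ),
        h m o l → h m' o' l → m i = m' i → o i = o' i)
    {m : ∀ j, M j} {o ob : ∀ j, O j} {l : Λ} (hob : h m ob l)
    (hloc : ∀ i, ∃ (m' : ∀ j, M j) (o' : ∀ j, O j), m' i = m i ∧ o' i = o i ∧ h m' o' l) :
    ob = o := by
  funext i
  obtain ⟨m', o', hm, ho, hh⟩ := hloc i
  rw [hSD i m m' ob o' l hob hh hm.symm, ho]

theorem stmt_3_general {n : ℕ} (M O : Fin n → Type) (Λ : Type)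
    (h : (∀ i, M i) → (∀ i, O i) → Λ → Prop)
    -- Strong Determinism
    (hSD : ∀ (i : Fin n) (m m' : ∀ j, M j) (o o' : ∀ j, O j) (l : Λ),
        h m o l → h m' o' l → m i = m' i → o i = o' i) :
    -- Locality
    ∀ (m : ∀ j, M j) (o : ∀ j, O j) (l : Λ),
      (∃ ob : ∀ j, O j, h m ob l) →
      (∀ i : Fin n, ∃ (m' : ∀ j, M j) (o' : ∀ j, O j),
          m' i = m i ∧ o' i = o i ∧ h m' o' l) →
      h m o l := by
  rintro m o l ⟨ob, hob⟩ hloc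
  rwa [← outcome_eq_of_strongDeterminism hSD hob hloc]

/-- Strong Determinism implies Locality. -/
theorem stmt_3 {n : ℕ} (hn : 1 ≤ n) (M O : Fin n → Type) (Λ : Type)
    (h : (∀ i, M i) → (∀ i, O i) → Λ → Prop)
    -- Strong Determinism
    (hSD : ∀ (i : Fin n) (m m' : ∀ j, M j) (o o' : ∀ j, O j) (l : Λ),
        h m o l → h m' o' l → m i = m' i → o i = o' i) :
    -- Locality
    ∀ (m : ∀ j, M j) (o : ∀ j, O j) (l : Λ),
      (∃ ob : ∀ j, O j, h m ob l) →
      (∀ i : Fin n, ∃ (m' : ∀ j, M j) (o' : ∀ j, O j),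
          m' i = m i ∧ o' i = o i ∧ h m' o' l) →
      h m o l :=
  stmt_3_general M O Λ h hSD
end

section
/- Let h be a relational hidden-variable model and let e be the empirical model induced by h, i.e. e(m̄,ō) holds iff there exists λ with h(m̄,ō,λ). If h satisfies λ-Independence and Parameter Independence, then e satisfies No-Signalling. -/
theorem stmt_4_general {n : ℕ} (M O : Fin n → Type) (Λ : Type)
    (h : (∀ i, M i) → (∀ i, O i) → Λ → Prop)
    (e : (∀ i, M i) → (∀ i, O i) → Prop)
    -- e is the empirical model induced by h
    (hind : ∀ m o, e m o ↔ ∃ l : Λ, h m o l)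
    -- λ-Independence
    (hLI : ∀ (m m' : ∀ j, M j) (l : Λ),
        (∃ (ob : ∀ j, O j) (l' : Λ), h m' ob l') →
        (∃ ob : ∀ j, O j, h m ob l) →
        ∃ ob : ∀ j, O j, h m' ob l)
    -- Parameter Independence
    (hPI : ∀ (i : Fin n) (m m' : ∀ j, M j), m i = m' i → ∀ (o : O i) (l : Λ),
        (∃ ob : ∀ j, O j, ob i = o ∧ h m ob l) →
        (∃ ob : ∀ j, O j, h m' ob l) →
        ∃ ob : ∀ j, O j, ob i = o ∧ h m' ob l) :
    -- No-Signalling for e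
    ∀ (i : Fin n) (m m' : ∀ j, M j), m i = m' i → ∀ o : O i,
      (∃ ob : ∀ j, O j, ob i = o ∧ e m ob) →
      (∃ ob : ∀ j, O j, e m' ob) →
      ∃ ob : ∀ j, O j, ob i = o ∧ e m' ob := by
  rintro i m m' hm o ⟨ob, rfl, he⟩ ⟨ob', he'⟩
  obtain ⟨l, hl⟩ := (hind m ob).1 he
  have hm'_defined : ∃ ob l, h m' ob l := ⟨ob', (hind m' ob').1 he'⟩
  -- λ-Independence moves the hidden variable `l` of the run at `m` over to `m'`,
  -- where Parameter Independence then transports the local outcome `ob i`.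
  have hm'_defined_at_l : ∃ ob, h m' ob l := hLI m m' l hm'_defined ⟨ob, hl⟩
  obtain ⟨ob'', hob'', hl''⟩ := hPI i m m' hm (ob i) l ⟨ob, rfl, hl⟩ hm'_defined_at_l
  exact ⟨ob'', hob'', (hind m' ob'').2 ⟨l, hl''⟩⟩

/-- If a hidden-variable model satisfies λ-Independence and Parameter
Independence, then the induced empirical model satisfies No-Signalling. -/
theorem stmt_4 {n : ℕ} (hn : 1 ≤ n) (M O : Fin n → Type) (Λ : Type)
    (h : (∀ i, M i) → (∀ i, O i) → Λ → Prop)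
    (e : (∀ i, M i) → (∀ i, O i) → Prop)
    -- e is the empirical model induced by h
    (hind : ∀ m o, e m o ↔ ∃ l : Λ, h m o l)
    -- λ-Independence
    (hLI : ∀ (m m' : ∀ j, M j) (l : Λ),
        (∃ (ob : ∀ j, O j) (l' : Λ), h m' ob l') →
        (∃ ob : ∀ j, O j, h m ob l) →
        ∃ ob : ∀ j, O j, h m' ob l)
    -- Parameter Independence
    (hPI : ∀ (i : Fin n) (m m' : ∀ j, M j), m i = m' i → ∀ (o : O i) (l : Λ),
        (∃ ob : ∀ j, O j, ob i = o ∧ h m ob l) →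
        (∃ ob : ∀ j, O j, h m' ob l) →
        ∃ ob : ∀ j, O j, ob i = o ∧ h m' ob l) :
    -- No-Signalling for e
    ∀ (i : Fin n) (m m' : ∀ j, M j), m i = m' i → ∀ o : O i,
      (∃ ob : ∀ j, O j, ob i = o ∧ e m ob) →
      (∃ ob : ∀ j, O j, e m' ob) →
      ∃ ob : ∀ j, O j, ob i = o ∧ e m' ob :=
  stmt_4_general M O Λ h e hind hLI hPI
end

section
/- An empirical model e satisfies No-Signalling if and only if there exist a set Λ and a relational hidden-variable model h ⊆ M × O × Λ satisfying λ-Independence and Parameter Independence which realizes e. -/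
/-!
Forward direction: the trivial hidden variable (`Λ = Unit`, `h m o _ := e m o`) is λ-independent
for free, and for it Parameter Independence is literally No-Signalling. Backward direction: given
`e m ō` and `e m' _`, realize both by hidden variables `λ, λ'`; λ-Independence makes `h m' _ λ`
defined, Parameter Independence then transfers the outcome `ō i` to `m'` at the same `λ`, and
realization brings it back to `e`.
-/

namespace RelationalModel

variable {ι : Type*} {M O : ι → Type*} {Λ : Type*}

def NoSignalling (e : (∀ i, M i) → (∀ i, O i) → Prop) : Prop :=
  ∀ (i : ι) (m m' : ∀ j, M j), m i = m' i → ∀ o : O i,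
    (∃ ob : ∀ j, O j, ob i = o ∧ e m ob) →
    (∃ ob : ∀ j, O j, e m' ob) →
    ∃ ob : ∀ j, O j, ob i = o ∧ e m' ob

def LambdaIndependent (h : (∀ i, M i) → (∀ i, O i) → Λ → Prop) : Prop :=
  ∀ (m m' : ∀ j, M j) (l : Λ),
    (∃ (ob : ∀ j, O j) (l' : Λ), h m' ob l') →
    (∃ ob : ∀ j, O j, h m ob l) →
    ∃ ob : ∀ j, O j, h m' ob l

def ParameterIndependent (h : (∀ i, M i) → (∀ i, O i) → Λ → Prop) : Prop :=
  ∀ (i : ι) (m m' : ∀ j, M j), m i = m' i → ∀ (o : O i) (l : Λ),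
    (∃ ob : ∀ j, O j, ob i = o ∧ h m ob l) →
    (∃ ob : ∀ j, O j, h m' ob l) →
    ∃ ob : ∀ j, O j, ob i = o ∧ h m' ob l

def Realizes (h : (∀ i, M i) → (∀ i, O i) → Λ → Prop)
    (e : (∀ i, M i) → (∀ i, O i) → Prop) : Prop :=
  ∀ (m : ∀ j, M j) (o : ∀ j, O j), e m o ↔ ∃ l : Λ, h m o l

def trivialModel (e : (∀ i, M i) → (∀ i, O i) → Prop) :
    (∀ i, M i) → (∀ i, O i) → Unit → Prop :=
  fun m o _ => e m o

theorem lambdaIndependent_trivialModel (e : (∀ i, M i) → (∀ i, O i) → Prop) :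
    LambdaIndependent (trivialModel e) := by
  rintro m m' l ⟨ob, _, hob⟩ -
  exact ⟨ob, hob⟩

theorem parameterIndependent_trivialModel_iff (e : (∀ i, M i) → (∀ i, O i) → Prop) :
    ParameterIndependent (trivialModel e) ↔ NoSignalling e :=
  ⟨fun hPI i m m' hmm o => hPI i m m' hmm o (), fun hNS i m m' hmm o _ => hNS i m m' hmm o⟩

theorem realizes_trivialModel (e : (∀ i, M i) → (∀ i, O i) → Prop) :
    Realizes (trivialModel e) e :=
  fun _ _ => ⟨fun he => ⟨(), he⟩, fun ⟨_, he⟩ => he⟩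

theorem NoSignalling.of_realizes {h : (∀ i, M i) → (∀ i, O i) → Λ → Prop}
    {e : (∀ i, M i) → (∀ i, O i) → Prop} (hLI : LambdaIndependent h)
    (hPI : ParameterIndependent h) (hreal : Realizes h e) : NoSignalling e := by
  rintro i m m' hmm o ⟨ob, rfl, he⟩ ⟨ob', he'⟩
  obtain ⟨l, hl⟩ := (hreal m ob).1 he
  obtain ⟨l', hl'⟩ := (hreal m' ob').1 he'
  obtain ⟨ob₂, hob₂⟩ := hLI m m' l ⟨ob', l', hl'⟩ ⟨ob, hl⟩
  obtain ⟨ob₃, hob₃i, hob₃⟩ := hPI i m m' hmm (ob i) l ⟨ob, rfl, hl⟩ ⟨ob₂, hob₂⟩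
  exact ⟨ob₃, hob₃i, (hreal m' ob₃).2 ⟨l, hob₃⟩⟩

theorem noSignalling_iff_exists_realizes (e : (∀ i, M i) → (∀ i, O i) → Prop) :
    NoSignalling e ↔ ∃ (Λ : Type) (h : (∀ i, M i) → (∀ i, O i) → Λ → Prop),
      LambdaIndependent h ∧ ParameterIndependent h ∧ Realizes h e :=
  ⟨fun hNS => ⟨Unit, trivialModel e, lambdaIndependent_trivialModel e,
      (parameterIndependent_trivialModel_iff e).2 hNS, realizes_trivialModel e⟩,
    fun ⟨_, _, hLI, hPI, hreal⟩ => NoSignalling.of_realizes hLI hPI hreal⟩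

end RelationalModel

theorem stmt_5_general {n : ℕ} (M O : Fin n → Type)
    (e : (∀ i, M i) → (∀ i, O i) → Prop) :
    -- No-Signalling for e
    (∀ (i : Fin n) (m m' : ∀ j, M j), m i = m' i → ∀ o : O i,
      (∃ ob : ∀ j, O j, ob i = o ∧ e m ob) →
      (∃ ob : ∀ j, O j, e m' ob) →
      ∃ ob : ∀ j, O j, ob i = o ∧ e m' ob)
    ↔
    ∃ (Λ : Type) (h : (∀ i, M i) → (∀ i, O i) → Λ → Prop),
      -- λ-Independence
      (∀ (m m' : ∀ j, M j) (l : Λ),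
          (∃ (ob : ∀ j, O j) (l' : Λ), h m' ob l') →
          (∃ ob : ∀ j, O j, h m ob l) →
          ∃ ob : ∀ j, O j, h m' ob l) ∧
      -- Parameter Independence
      (∀ (i : Fin n) (m m' : ∀ j, M j), m i = m' i → ∀ (o : O i) (l : Λ),
          (∃ ob : ∀ j, O j, ob i = o ∧ h m ob l) →
          (∃ ob : ∀ j, O j, h m' ob l) →
          ∃ ob : ∀ j, O j, ob i = o ∧ h m' ob l) ∧
      -- h realizes e
      (∀ (m : ∀ j, M j) (o : ∀ j, O j), e m o ↔ ∃ l : Λ, h m o l) :=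
  RelationalModel.noSignalling_iff_exists_realizes e

/-- An empirical model satisfies No-Signalling iff it is realized by a
hidden-variable model satisfying λ-Independence and Parameter Independence. -/
theorem stmt_5 {n : ℕ} (hn : 1 ≤ n) (M O : Fin n → Type)
    (e : (∀ i, M i) → (∀ i, O i) → Prop) :
    -- No-Signalling for e
    (∀ (i : Fin n) (m m' : ∀ j, M j), m i = m' i → ∀ o : O i,
      (∃ ob : ∀ j, O j, ob i = o ∧ e m ob) →
      (∃ ob : ∀ j, O j, e m' ob) →
      ∃ ob : ∀ j, O j, ob i = o ∧ e m' ob)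
    ↔
    ∃ (Λ : Type) (h : (∀ i, M i) → (∀ i, O i) → Λ → Prop),
      -- λ-Independence
      (∀ (m m' : ∀ j, M j) (l : Λ),
          (∃ (ob : ∀ j, O j) (l' : Λ), h m' ob l') →
          (∃ ob : ∀ j, O j, h m ob l) →
          ∃ ob : ∀ j, O j, h m' ob l) ∧
      -- Parameter Independence
      (∀ (i : Fin n) (m m' : ∀ j, M j), m i = m' i → ∀ (o : O i) (l : Λ),
          (∃ ob : ∀ j, O j, ob i = o ∧ h m ob l) →
          (∃ ob : ∀ j, O j, h m' ob l) →
          ∃ ob : ∀ j, O j, ob i = o ∧ h m' ob l) ∧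
      -- h realizes e
      (∀ (m : ∀ j, M j) (o : ∀ j, O j), e m o ↔ ∃ l : Λ, h m o l) :=
  stmt_5_general M O e
end

section
/- Let h be a relational hidden-variable model satisfying λ-Independence and Locality. Then there exists a relational hidden-variable model h' (over a possibly different set Λ' of hidden-variable values) which is equivalent to h (i.e. realizes the same empirical model) and satisfies λ-Independence and Strong Determinism. -/
/-!
Replace a hidden value `l` by a pair `(l, f)`, where `f` assigns to every site `i` and
measurement `μ` one outcome that `l` permits for `μ` at site `i`. The outcome of `(l, f)` on `m`
is read off from `f`, which makes the new model strongly deterministic; Locality says that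
such pointwise-permitted outcomes are jointly possible under `l`, so the empirical model
does not change.
-/

open Function

lemma exists_update_selection {α β : Type*} [DecidableEq α] (S : α → Set β) {a : α} {b : β}
    (hb : b ∈ S a) : ∃ g : α → β, g a = b ∧ ∀ x, (S x).Nonempty → g x ∈ S x := by
  have : Nonempty β := ⟨b⟩
  refine ⟨update (fun x => Classical.epsilon (S x)) a b, update_self .., fun x hx => ?_⟩
  rcases eq_or_ne x a with rfl | hxa
  · simpa using hb
  · rw [update_of_ne hxa]
    exact Classical.epsilon_spec (p := S x) hx

namespace HiddenVariableModel

variable {ι Λ : Type*} {M O : ι → Type*} (h : (∀ i, M i) → (∀ i, O i) → Λ → Prop)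

def LambdaIndependent : Prop :=
  ∀ (m m' : ∀ i, M i) (l : Λ), (∃ ob l', h m' ob l') → (∃ ob, h m ob l) → ∃ ob, h m' ob l

/-- `o ∈ localOutcomes h l i μ` is the paper's `h(μ, o, l)↓`. -/
def localOutcomes (l : Λ) (i : ι) (μ : M i) : Set (O i) :=
  {o' | ∃ (m' : ∀ j, M j) (o'' : ∀ j, O j), m' i = μ ∧ o'' i = o' ∧ h m' o'' l}

def Local : Prop :=
  ∀ (m : ∀ i, M i) (o : ∀ i, O i) (l : Λ),
    (∃ ob, h m ob l) → (∀ i, o i ∈ localOutcomes h l i (m i)) → h m o l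

def StronglyDeterministic : Prop :=
  ∀ (i : ι) (m m' : ∀ j, M j) (o o' : ∀ j, O j) (l : Λ),
    h m o l → h m' o' l → m i = m' i → o i = o' i

def IsResponse (l : Λ) (f : ∀ i, M i → O i) : Prop :=
  ∀ m : ∀ i, M i, (∃ ob, h m ob l) → h m (fun i => f i (m i)) l

def determinize (m : ∀ i, M i) (o : ∀ i, O i) (p : Λ × ∀ i, M i → O i) : Prop :=
  o = (fun i => p.2 i (m i)) ∧ h m o p.1 ∧ IsResponse h p.1 p.2

variable {h}

lemma localOutcomes_nonempty {l : Λ} {m : ∀ i, M i} {ob : ∀ i, O i} (hm : h m ob l) (i : ι) :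
    (localOutcomes h l i (m i)).Nonempty :=
  ⟨ob i, m, ob, rfl, rfl, hm⟩

lemma exists_isResponse (hL : Local h) {m : ∀ i, M i} {o : ∀ i, O i} {l : Λ}
    (hml : h m o l) : ∃ f : ∀ i, M i → O i, IsResponse h l f ∧ ∀ i, f i (m i) = o i := by
  classical
  choose f hfm hf using fun i =>
    exists_update_selection (localOutcomes h l i) (a := m i) ⟨m, o, rfl, rfl, hml⟩
  refine ⟨f, fun m' ⟨ob, hm'⟩ => hL m' _ l ⟨ob, hm'⟩ fun i => ?_, hfm⟩
  exact hf i (m' i) (localOutcomes_nonempty hm' i)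

lemma exists_determinize_iff (hL : Local h) (m : ∀ i, M i) (o : ∀ i, O i) :
    (∃ p, determinize h m o p) ↔ ∃ l, h m o l := by
  constructor
  · rintro ⟨⟨l, _⟩, -, hml, -⟩
    exact ⟨l, hml⟩
  · rintro ⟨l, hml⟩
    obtain ⟨f, hf, hfm⟩ := exists_isResponse hL hml
    exact ⟨(l, f), funext fun i => (hfm i).symm, hml, hf⟩

lemma determinize_lambdaIndependent (hLI : LambdaIndependent h) :
    LambdaIndependent (determinize h) := by
  rintro m m' ⟨l, f⟩ ⟨ob', ⟨l', _⟩, -, hm', -⟩ ⟨ob, -, hm, hf⟩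
  exact ⟨_, rfl, hf m' (hLI m m' l ⟨ob', l', hm'⟩ ⟨ob, hm⟩), hf⟩

lemma determinize_stronglyDeterministic : StronglyDeterministic (determinize h) := by
  rintro i m m' o o' ⟨l, f⟩ ⟨rfl, -⟩ ⟨rfl, -⟩ hmm'
  exact congrArg (f i) hmm'

end HiddenVariableModel

open HiddenVariableModel in
theorem stmt_8_general {n : ℕ} (M O : Fin n → Type) (Λ : Type)
    (h : (∀ i, M i) → (∀ i, O i) → Λ → Prop)
    -- λ-Independence for h
    (hLI : ∀ (m m' : ∀ j, M j) (l : Λ),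
        (∃ (ob : ∀ j, O j) (l' : Λ), h m' ob l') →
        (∃ ob : ∀ j, O j, h m ob l) →
        ∃ ob : ∀ j, O j, h m' ob l)
    -- Locality for h
    (hL : ∀ (m : ∀ j, M j) (o : ∀ j, O j) (l : Λ),
        (∃ ob : ∀ j, O j, h m ob l) →
        (∀ i : Fin n, ∃ (m' : ∀ j, M j) (o' : ∀ j, O j),
            m' i = m i ∧ o' i = o i ∧ h m' o' l) →
        h m o l) :
    ∃ (Λ' : Type) (h' : (∀ i, M i) → (∀ i, O i) → Λ' → Prop),
      -- h' is equivalent to h : they realize the same empirical model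
      (∀ (m : ∀ j, M j) (o : ∀ j, O j), (∃ l : Λ, h m o l) ↔ ∃ l' : Λ', h' m o l') ∧
      -- λ-Independence for h'
      (∀ (m m' : ∀ j, M j) (l : Λ'),
          (∃ (ob : ∀ j, O j) (l' : Λ'), h' m' ob l') →
          (∃ ob : ∀ j, O j, h' m ob l) →
          ∃ ob : ∀ j, O j, h' m' ob l) ∧
      -- Strong Determinism for h'
      (∀ (i : Fin n) (m m' : ∀ j, M j) (o o' : ∀ j, O j) (l : Λ'),
          h' m o l → h' m' o' l → m i = m' i → o i = o' i) :=
  ⟨_, determinize h, fun m o => (exists_determinize_iff hL m o).symm,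
    determinize_lambdaIndependent hLI, determinize_stronglyDeterministic⟩

/-- Every hidden-variable model satisfying λ-Independence and Locality is
equivalent to one satisfying λ-Independence and Strong Determinism. -/
theorem stmt_8 {n : ℕ} (hn : 1 ≤ n) (M O : Fin n → Type) (Λ : Type)
    (h : (∀ i, M i) → (∀ i, O i) → Λ → Prop)
    -- λ-Independence for h
    (hLI : ∀ (m m' : ∀ j, M j) (l : Λ),
        (∃ (ob : ∀ j, O j) (l' : Λ), h m' ob l') →
        (∃ ob : ∀ j, O j, h m ob l) →
        ∃ ob : ∀ j, O j, h m' ob l)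
    -- Locality for h
    (hL : ∀ (m : ∀ j, M j) (o : ∀ j, O j) (l : Λ),
        (∃ ob : ∀ j, O j, h m ob l) →
        (∀ i : Fin n, ∃ (m' : ∀ j, M j) (o' : ∀ j, O j),
            m' i = m i ∧ o' i = o i ∧ h m' o' l) →
        h m o l) :
    ∃ (Λ' : Type) (h' : (∀ i, M i) → (∀ i, O i) → Λ' → Prop),
      -- h' is equivalent to h : they realize the same empirical model
      (∀ (m : ∀ j, M j) (o : ∀ j, O j), (∃ l : Λ, h m o l) ↔ ∃ l' : Λ', h' m o l') ∧
      -- λ-Independence for h'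
      (∀ (m m' : ∀ j, M j) (l : Λ'),
          (∃ (ob : ∀ j, O j) (l' : Λ'), h' m' ob l') →
          (∃ ob : ∀ j, O j, h' m ob l) →
          ∃ ob : ∀ j, O j, h' m' ob l) ∧
      -- Strong Determinism for h'
      (∀ (i : Fin n) (m m' : ∀ j, M j) (o o' : ∀ j, O j) (l : Λ'),
          h' m o l → h' m' o' l → m i = m' i → o i = o' i) :=
  stmt_8_general M O Λ h hLI hL
end

section
/- Consider the bipartite system type with M_1 = {X}, M_2 = {Y}, O_1 = O_2 = {a,b}, and the empirical model e = {((X,Y),(a,b)), ((X,Y),(b,a))} (so e holds exactly on outcomes (a,b) and (b,a) and fails on (a,a) and (b,b)). Then e is not realized by any relational hidden-variable model satisfying Single-Valuedness and Outcome Independence. -/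
/-!
With a single hidden state, Outcome Independence says that the set of outcomes a model allows
for a fixed measurement is closed under splicing coordinates of two allowed outcomes. The
outcomes `(a,b)` and `(b,a)` are allowed by `e`, but splicing them yields `(a,a)`, which is not.
-/

def IsSpliceClosed {ι : Type*} [DecidableEq ι] {O : ι → Type*} (S : Set (∀ i, O i)) : Prop :=
  ∀ o ∈ S, ∀ o' ∈ S, ∀ i, Function.update o' i (o i) ∈ S

theorem isSpliceClosed_setOf_exists {ι M Λ : Type*} [DecidableEq ι] {O : ι → Type*}
    {h : M → (∀ i, O i) → Λ → Prop} (hsv : ∃ l₀ : Λ, ∀ l : Λ, l = l₀)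
    (hoi : ∀ (m : M) (i : ι) (o o' : ∀ i, O i) (l : Λ),
      h m o l → h m o' l → h m (Function.update o' i (o i)) l) (m : M) :
    IsSpliceClosed {o | ∃ l, h m o l} := by
  obtain ⟨l₀, hl₀⟩ := hsv
  rintro o ⟨l, hl⟩ o' ⟨l', hl'⟩ i
  rw [hl₀ l] at hl
  rw [hl₀ l'] at hl'
  exact ⟨l₀, hoi m i o o' l₀ hl hl'⟩

theorem not_isSpliceClosed_setOf_ne : ¬ IsSpliceClosed {o : Fin 2 → Bool | o 0 ≠ o 1} := by
  intro hclosed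
  have hspliced := hclosed ![false, true] (by simp) ![true, false] (by simp) 0
  simp at hspliced

/-- EPR: the model with M₁ = {X}, M₂ = {Y} (singletons), O₁ = O₂ = {a,b}
(encoded as Bool, a = false, b = true), holding exactly on the outcomes
(a,b) and (b,a), is not realized by any hidden-variable model satisfying
Single-Valuedness and Outcome Independence. -/
theorem stmt_9 (e : (Fin 2 → Unit) → (Fin 2 → Bool) → Prop)
    -- e holds exactly on (a,b) and (b,a), i.e. where the two outcomes differ
    (he : ∀ m o, e m o ↔ o 0 ≠ o 1) :
    ¬ ∃ (Λ : Type) (h : (Fin 2 → Unit) → (Fin 2 → Bool) → Λ → Prop),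
      -- Single-Valuedness: Λ is a singleton
      (∃ l₀ : Λ, ∀ l : Λ, l = l₀) ∧
      -- Outcome Independence
      (∀ (m : Fin 2 → Unit) (i : Fin 2) (o o' : Fin 2 → Bool) (l : Λ),
          h m o l → h m o' l → h m (Function.update o' i (o i)) l) ∧
      -- h realizes e
      (∀ m o, e m o ↔ ∃ l : Λ, h m o l) := by
  rintro ⟨Λ, h, hsv, hoi, hreal⟩
  have hsupport : {o | ∃ l, h (fun _ => ()) o l} = {o : Fin 2 → Bool | o 0 ≠ o 1} := by
    ext o
    exact (hreal _ o).symm.trans (he _ o)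
  exact not_isSpliceClosed_setOf_ne (hsupport ▸ isSpliceClosed_setOf_exists hsv hoi _)
end

section
/- No Hardy model is realized by any relational hidden-variable model satisfying λ-Independence and Locality. -/
/-!
Fix a hidden variable `l` producing `(R,R)` at `(X₁,Y₁)`. Since the model is total, λ-Independence
makes every context defined at `l`. Locality then pastes the `X₁ ↦ R` outcome of `(X₁,Y₁)` onto
any outcome of `(X₁,Y₂)` at `l`, and `(R,R)` is impossible there, so `Y₂ ↦ G` at `l`; symmetrically
`X₂ ↦ G` at `l`. Pasting these two local outcomes gives `(G,G)` at `(X₂,Y₂)`, which is forbidden.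
-/

section HiddenVariable

variable {M O Λ : Type*}

def LambdaIndependent (h : M → O → Λ → Prop) : Prop :=
  ∀ (m m' : M) (l : Λ), (∃ (ob : O) (l' : Λ), h m' ob l') → (∃ ob : O, h m ob l) →
    ∃ ob : O, h m' ob l

def Local {ι : Type*} (h : (ι → M) → (ι → O) → Λ → Prop) : Prop :=
  ∀ (m : ι → M) (o : ι → O) (l : Λ), (∃ ob, h m ob l) →
    (∀ i, ∃ (m' : ι → M) (o' : ι → O), m' i = m i ∧ o' i = o i ∧ h m' o' l) → h m o l

theorem LambdaIndependent.exists_outcome {h : M → O → Λ → Prop} (hI : LambdaIndependent h)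
    (hsupp : ∀ m, ∃ (o : O) (l' : Λ), h m o l') {m₀ : M} {o₀ : O} {l : Λ} (hl : h m₀ o₀ l)
    (m : M) : ∃ o, h m o l :=
  hI m₀ m l (hsupp m) ⟨o₀, hl⟩

theorem Local.paste {h : (Fin 2 → M) → (Fin 2 → O) → Λ → Prop} (hL : Local h)
    {a b : M} {x y : O} {l : Λ} (hdef : ∃ ob, h ![a, b] ob l)
    {m₁ m₂ : Fin 2 → M} {o₁ o₂ : Fin 2 → O} (h₁ : h m₁ o₁ l) (hm₁ : m₁ 0 = a) (ho₁ : o₁ 0 = x)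
    (h₂ : h m₂ o₂ l) (hm₂ : m₂ 1 = b) (ho₂ : o₂ 1 = y) : h ![a, b] ![x, y] l :=
  hL _ _ l hdef <| Fin.forall_fin_two.mpr ⟨⟨m₁, o₁, hm₁, ho₁, h₁⟩, ⟨m₂, o₂, hm₂, ho₂, h₂⟩⟩

end HiddenVariable

-- Measurements X₁,Y₁ are encoded as `false` and X₂,Y₂ as `true`; outcomes R,G as `false`,`true`.
/-- Hardy: no Hardy model is realized by any hidden-variable model satisfying
λ-Independence and Locality.  Measurements X₁,Y₁ are encoded as false and
X₂,Y₂ as true; outcomes R,G as false,true. -/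
theorem stmt_11 (e : (Fin 2 → Bool) → (Fin 2 → Bool) → Prop)
    -- e((X₁,Y₁),(R,R)) holds
    (h11 : e ![false, false] ![false, false])
    -- e((X₁,Y₂),(R,R)) fails
    (h12 : ¬ e ![false, true] ![false, false])
    -- e((X₂,Y₁),(R,R)) fails
    (h21 : ¬ e ![true, false] ![false, false])
    -- e((X₂,Y₂),(G,G)) fails
    (h22 : ¬ e ![true, true] ![true, true])
    -- e is total
    (htot : ∀ m : Fin 2 → Bool, ∃ o : Fin 2 → Bool, e m o) :
    ¬ ∃ (Λ : Type) (h : (Fin 2 → Bool) → (Fin 2 → Bool) → Λ → Prop),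
      -- λ-Independence
      (∀ (m m' : Fin 2 → Bool) (l : Λ),
          (∃ (ob : Fin 2 → Bool) (l' : Λ), h m' ob l') →
          (∃ ob : Fin 2 → Bool, h m ob l) →
          ∃ ob : Fin 2 → Bool, h m' ob l) ∧
      -- Locality
      (∀ (m o : Fin 2 → Bool) (l : Λ),
          (∃ ob : Fin 2 → Bool, h m ob l) →
          (∀ i : Fin 2, ∃ (m' o' : Fin 2 → Bool),
              m' i = m i ∧ o' i = o i ∧ h m' o' l) →
          h m o l) ∧
      -- h realizes e
      (∀ m o, e m o ↔ ∃ l : Λ, h m o l) := by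
  rintro ⟨Λ, h, hI, hL, hreal⟩
  obtain ⟨l, hl⟩ := (hreal _ _).mp h11
  have hdef : ∀ m, ∃ o, h m o l := LambdaIndependent.exists_outcome hI
    (fun m ↦ (htot m).imp fun o ↦ (hreal m o).mp) hl
  obtain ⟨oX, hoX⟩ := hdef ![true, false]
  obtain ⟨oY, hoY⟩ := hdef ![false, true]
  have hX₂G : oX 0 = true := Bool.eq_true_of_not_eq_false fun hR ↦
    h21 <| (hreal _ _).mpr ⟨l, Local.paste hL ⟨oX, hoX⟩ hoX rfl hR hl rfl rfl⟩
  have hY₂G : oY 1 = true := Bool.eq_true_of_not_eq_false fun hR ↦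
    h12 <| (hreal _ _).mpr ⟨l, Local.paste hL ⟨oY, hoY⟩ hl rfl rfl hoY rfl hR⟩
  exact h22 <| (hreal _ _).mpr ⟨l, Local.paste hL (hdef _) hoX rfl hX₂G hoY rfl hY₂G⟩
end

section
/- Let p be a probabilistic empirical model satisfying Probabilistic No-Signalling. Then the possibilistic collapse of p satisfies No-Signalling. -/
/-!
Under PNS the conditional probability `p(o | m)` does not depend on the measurement context
`m` as long as `p(m) > 0`. A conditional probability is positive exactly when some outcome with
`i`-th component `o` has positive probability, so this possibilistic fact transfers from `m` to `m'`.
-/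

theorem Fintype.sum_pos_iff_exists_pos_of_nonneg {α M : Type*} [Fintype α] [AddCommMonoid M]
    [PartialOrder M] [IsOrderedCancelAddMonoid M] {f : α → M} (hf : ∀ x, 0 ≤ f x) :
    0 < ∑ x, f x ↔ ∃ x, 0 < f x := by
  simp [Finset.sum_pos_iff_of_nonneg fun x _ => hf x]

theorem Fintype.sum_ite_pos_iff_of_nonneg {α M : Type*} [Fintype α] [AddCommMonoid M]
    [PartialOrder M] [IsOrderedCancelAddMonoid M] {f : α → M} (P : α → Prop) [DecidablePred P]
    (hf : ∀ x, 0 ≤ f x) :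
    0 < ∑ x, (if P x then f x else 0) ↔ ∃ x, P x ∧ 0 < f x := by
  rw [← Finset.sum_filter, Finset.sum_pos_iff_of_nonneg fun x _ => hf x]
  simp

theorem stmt_13_general {n : ℕ} (M O : Fin n → Type)
    [∀ i, Fintype (O i)] [∀ i, DecidableEq (O i)]
    (p : (∀ i, M i) → (∀ i, O i) → ℝ)
    -- p is a probability distribution on M × O
    (hpos : ∀ m o, 0 ≤ p m o)
    -- Probabilistic No-Signalling
    (hPNS : ∀ (i : Fin n) (m m' : ∀ j, M j), m i = m' i → ∀ o : O i,
        (0 < ∑ ob : ∀ j, O j, p m ob) → (0 < ∑ ob : ∀ j, O j, p m' ob) →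
        (∑ ob : ∀ j, O j, if ob i = o then p m ob else 0) /
            (∑ ob : ∀ j, O j, p m ob)
          = (∑ ob : ∀ j, O j, if ob i = o then p m' ob else 0) /
            (∑ ob : ∀ j, O j, p m' ob)) :
    -- No-Signalling for the possibilistic collapse e(m,o) ↔ p(m,o) > 0
    ∀ (i : Fin n) (m m' : ∀ j, M j), m i = m' i → ∀ o : O i,
      (∃ ob : ∀ j, O j, ob i = o ∧ 0 < p m ob) →
      (∃ ob : ∀ j, O j, 0 < p m' ob) →
      ∃ ob : ∀ j, O j, ob i = o ∧ 0 < p m' ob := by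
  intro i m m' hmm' o hmo hm'
  have hm_pos : 0 < ∑ ob, p m ob :=
    (Fintype.sum_pos_iff_exists_pos_of_nonneg (hpos m)).2 (hmo.imp fun _ h => h.2)
  have hm'_pos : 0 < ∑ ob, p m' ob := (Fintype.sum_pos_iff_exists_pos_of_nonneg (hpos m')).2 hm'
  rw [← Fintype.sum_ite_pos_iff_of_nonneg _ (hpos m'), ← div_pos_iff_of_pos_right hm'_pos,
    ← hPNS i m m' hmm' o hm_pos hm'_pos, div_pos_iff_of_pos_right hm_pos,
    Fintype.sum_ite_pos_iff_of_nonneg _ (hpos m)]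
  exact hmo

/-- If a probabilistic empirical model satisfies Probabilistic No-Signalling,
then its possibilistic collapse satisfies No-Signalling. -/
theorem stmt_13 {n : ℕ} (hn : 1 ≤ n) (M O : Fin n → Type)
    [∀ i, Fintype (M i)] [∀ i, Fintype (O i)] [∀ i, DecidableEq (O i)]
    (p : (∀ i, M i) → (∀ i, O i) → ℝ)
    -- p is a probability distribution on M × O
    (hpos : ∀ m o, 0 ≤ p m o)
    (hsum : ∑ m : ∀ i, M i, ∑ o : ∀ i, O i, p m o = 1)
    -- Probabilistic No-Signalling
    (hPNS : ∀ (i : Fin n) (m m' : ∀ j, M j), m i = m' i → ∀ o : O i,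
        (0 < ∑ ob : ∀ j, O j, p m ob) → (0 < ∑ ob : ∀ j, O j, p m' ob) →
        (∑ ob : ∀ j, O j, if ob i = o then p m ob else 0) /
            (∑ ob : ∀ j, O j, p m ob)
          = (∑ ob : ∀ j, O j, if ob i = o then p m' ob else 0) /
            (∑ ob : ∀ j, O j, p m' ob)) :
    -- No-Signalling for the possibilistic collapse e(m,o) ↔ p(m,o) > 0
    ∀ (i : Fin n) (m m' : ∀ j, M j), m i = m' i → ∀ o : O i,
      (∃ ob : ∀ j, O j, ob i = o ∧ 0 < p m ob) →
      (∃ ob : ∀ j, O j, 0 < p m' ob) →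
      ∃ ob : ∀ j, O j, ob i = o ∧ 0 < p m' ob :=
  stmt_13_general M O p hpos hPNS
end

section
/- Let q be a probabilistic hidden-variable model and let h be its possibilistic collapse. Then: (1) if q satisfies Probabilistic λ-Independence then h satisfies λ-Independence; (2) if q satisfies Probabilistic Outcome Independence then h satisfies Outcome Independence; (3) if q satisfies Probabilistic Parameter Independence then h satisfies Parameter Independence; (4) if q satisfies Probabilistic Locality then h satisfies Locality. -/
/-!
Every probability in sight is a ratio of sums of values of `q`, all nonnegative, so such a sum is
positive exactly when one of its terms is, i.e. when the collapse holds at some point. Each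
probabilistic condition equates two ratios; when both denominators are positive, positivity of
one numerator forces positivity of the other, which is the relational condition.
-/

open Finset

section Positivity

variable {ι : Type*} [Fintype ι] {f : ι → ℝ}

lemma sum_pos_of_nonneg_of_pos (hf : ∀ j, 0 ≤ f j) (i : ι) (hi : 0 < f i) : 0 < ∑ j, f j :=
  sum_pos' (fun j _ => hf j) ⟨i, mem_univ i, hi⟩

lemma exists_pos_of_sum_pos (h : 0 < ∑ j, f j) : ∃ i, 0 < f i := by
  simpa using exists_lt_of_sum_lt (s := univ) (f := fun _ => 0) (by simpa using h)

lemma sum_ite_pos {p : ι → Prop} [DecidablePred p] (hf : ∀ j, 0 ≤ f j) (i : ι) (hp : p i)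
    (hi : 0 < f i) : 0 < ∑ j, if p j then f j else 0 :=
  sum_pos_of_nonneg_of_pos (fun j => ite_nonneg (hf j) le_rfl) i (by rwa [if_pos hp])

lemma exists_pos_of_sum_ite_pos {p : ι → Prop} [DecidablePred p]
    (h : 0 < ∑ j, if p j then f j else 0) : ∃ i, p i ∧ 0 < f i := by
  obtain ⟨i, hi⟩ := exists_pos_of_sum_pos h
  by_cases hp : p i
  · exact ⟨i, hp, by rwa [if_pos hp] at hi⟩
  · simp [hp] at hi

lemma pos_of_div_eq_div {a b c d : ℝ} (h : a / b = c / d) (ha : 0 < a) (hb : 0 < b)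
    (hd : 0 < d) : 0 < c := by
  rw [← div_pos_iff_of_pos_right hd, ← h]
  exact div_pos ha hb

end Positivity

section Collapse

variable {n : ℕ} {M O : Fin n → Type} {Λ : Type}
  {q : (∀ i, M i) → (∀ i, O i) → Λ → ℝ}

theorem lambdaIndependence_of_prob [∀ i, Fintype (O i)] [Fintype Λ]
    (hpos : ∀ m o l, 0 ≤ q m o l)
    (hP : ∀ (m m' : ∀ j, M j) (l : Λ),
        (0 < ∑ ob : ∀ j, O j, ∑ l' : Λ, q m ob l') →
        (0 < ∑ ob : ∀ j, O j, ∑ l' : Λ, q m' ob l') →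
        (∑ ob : ∀ j, O j, q m ob l) / (∑ ob : ∀ j, O j, ∑ l' : Λ, q m ob l')
          = (∑ ob : ∀ j, O j, q m' ob l) /
            (∑ ob : ∀ j, O j, ∑ l' : Λ, q m' ob l'))
    (m m' : ∀ j, M j) (l : Λ) (hm' : ∃ (ob : ∀ j, O j) (l' : Λ), 0 < q m' ob l')
    (hml : ∃ ob : ∀ j, O j, 0 < q m ob l) : ∃ ob : ∀ j, O j, 0 < q m' ob l := by
  have marginal_pos : ∀ (m : ∀ j, M j) ob l, 0 < q m ob l → 0 < ∑ ob, ∑ l', q m ob l' :=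
    fun m ob l h => sum_pos_of_nonneg_of_pos (fun ob => sum_nonneg fun l _ => hpos m ob l) ob
      (sum_pos_of_nonneg_of_pos (hpos m ob) l h)
  obtain ⟨ob₀, l₀, h₀⟩ := hm'
  obtain ⟨ob₁, h₁⟩ := hml
  have hm_marg := marginal_pos m ob₁ l h₁
  have hm'_marg := marginal_pos m' ob₀ l₀ h₀
  exact exists_pos_of_sum_pos (pos_of_div_eq_div (hP m m' l hm_marg hm'_marg)
    (sum_pos_of_nonneg_of_pos (hpos m · l) ob₁ h₁) hm_marg hm'_marg)

theorem outcomeIndependence_of_prob [∀ i, Fintype (O i)] [∀ i, DecidableEq (O i)]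
    (hpos : ∀ m o l, 0 ≤ q m o l)
    (hP : ∀ (m : ∀ j, M j) (i : Fin n) (o : O i) (ob' : ∀ j, O j) (l : Λ),
        (0 < ∑ ob : ∀ j, O j, q m ob l) →
        (0 < ∑ o'' : O i, q m (Function.update ob' i o'') l) →
        (∑ ob : ∀ j, O j, if ob i = o then q m ob l else 0) /
            (∑ ob : ∀ j, O j, q m ob l)
          = q m (Function.update ob' i o) l /
            (∑ o'' : O i, q m (Function.update ob' i o'') l))
    (m : ∀ j, M j) (i : Fin n) (o o' : ∀ j, O j) (l : Λ) (ho : 0 < q m o l)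
    (ho' : 0 < q m o' l) : 0 < q m (Function.update o' i (o i)) l := by
  have hml : 0 < ∑ ob, q m ob l := sum_pos_of_nonneg_of_pos (hpos m · l) o ho
  have hden : 0 < ∑ o'' : O i, q m (Function.update o' i o'') l :=
    sum_pos_of_nonneg_of_pos (fun _ => hpos _ _ l) (o' i) (by rwa [Function.update_eq_self])
  exact pos_of_div_eq_div (hP m i (o i) o' l hml hden) (sum_ite_pos (hpos m · l) o rfl ho)
    hml hden

theorem parameterIndependence_of_prob [∀ i, Fintype (M i)] [∀ i, Fintype (O i)]
    [∀ i, DecidableEq (M i)] [∀ i, DecidableEq (O i)]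
    (hpos : ∀ m o l, 0 ≤ q m o l)
    (hP : ∀ (i : Fin n) (o : O i) (m : ∀ j, M j) (l : Λ),
        (0 < ∑ ob : ∀ j, O j, q m ob l) →
        (∑ ob : ∀ j, O j, if ob i = o then q m ob l else 0) /
            (∑ ob : ∀ j, O j, q m ob l)
          = (∑ m' : ∀ j, M j, if m' i = m i then
                (∑ ob : ∀ j, O j, if ob i = o then q m' ob l else 0) else 0) /
            (∑ m' : ∀ j, M j, if m' i = m i then
                (∑ ob : ∀ j, O j, q m' ob l) else 0))
    (i : Fin n) (m m' : ∀ j, M j) (hmm' : m i = m' i) (o : O i) (l : Λ)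
    (hm : ∃ ob : ∀ j, O j, ob i = o ∧ 0 < q m ob l)
    (hm' : ∃ ob : ∀ j, O j, 0 < q m' ob l) :
    ∃ ob : ∀ j, O j, ob i = o ∧ 0 < q m' ob l := by
  obtain ⟨ob₀, hob₀, h₀⟩ := hm
  obtain ⟨ob₁, h₁⟩ := hm'
  have hml : 0 < ∑ ob, q m ob l := sum_pos_of_nonneg_of_pos (hpos m · l) ob₀ h₀
  have hm'l : 0 < ∑ ob, q m' ob l := sum_pos_of_nonneg_of_pos (hpos m' · l) ob₁ h₁
  -- PPI at `m` and at `m'` have the same right-hand side, as `m i = m' i`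
  have hcond := (hP i o m l hml).trans (hmm' ▸ hP i o m' l hm'l).symm
  exact exists_pos_of_sum_ite_pos
    (pos_of_div_eq_div hcond (sum_ite_pos (hpos m · l) ob₀ hob₀ h₀) hml hm'l)

theorem locality_of_prob [∀ i, Fintype (M i)] [∀ i, Fintype (O i)]
    [∀ i, DecidableEq (M i)] [∀ i, DecidableEq (O i)]
    (hpos : ∀ m o l, 0 ≤ q m o l)
    (hP : ∀ (m : ∀ j, M j) (o : ∀ j, O j) (l : Λ),
        (0 < ∑ ob : ∀ j, O j, q m ob l) →
        q m o l / (∑ ob : ∀ j, O j, q m ob l)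
          = ∏ i : Fin n,
              ((∑ m' : ∀ j, M j, if m' i = m i then
                  (∑ ob : ∀ j, O j, if ob i = o i then q m' ob l else 0) else 0) /
               (∑ m' : ∀ j, M j, if m' i = m i then
                  (∑ ob : ∀ j, O j, q m' ob l) else 0)))
    (m : ∀ j, M j) (o : ∀ j, O j) (l : Λ) (hml : ∃ ob : ∀ j, O j, 0 < q m ob l)
    (hloc : ∀ i : Fin n, ∃ (m' : ∀ j, M j) (o' : ∀ j, O j),
        m' i = m i ∧ o' i = o i ∧ 0 < q m' o' l) :
    0 < q m o l := by
  obtain ⟨ob₀, h₀⟩ := hml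
  have hml : 0 < ∑ ob, q m ob l := sum_pos_of_nonneg_of_pos (hpos m · l) ob₀ h₀
  rw [← div_pos_iff_of_pos_right hml, hP m o l hml]
  refine prod_pos fun i _ => ?_
  obtain ⟨m', o', hm', ho', h⟩ := hloc i
  refine div_pos (sum_ite_pos ?_ m' hm' (sum_ite_pos (hpos m' · l) o' ho' h))
    (sum_ite_pos ?_ m' hm' (sum_pos_of_nonneg_of_pos (hpos m' · l) o' h))
  · exact fun m'' => sum_nonneg fun ob _ => ite_nonneg (hpos m'' ob l) le_rfl
  · exact fun m'' => sum_nonneg fun ob _ => hpos m'' ob l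

end Collapse

theorem stmt_14_general {n : ℕ} (M O : Fin n → Type) (Λ : Type)
    [∀ i, Fintype (M i)] [∀ i, Fintype (O i)] [Fintype Λ]
    [∀ i, DecidableEq (M i)] [∀ i, DecidableEq (O i)]
    (q : (∀ i, M i) → (∀ i, O i) → Λ → ℝ)
    -- q is a probability distribution on M × O × Λ
    (hpos : ∀ m o l, 0 ≤ q m o l)
    (h : (∀ i, M i) → (∀ i, O i) → Λ → Prop)
    -- h is the possibilistic collapse of q
    (hcol : ∀ m o l, h m o l ↔ 0 < q m o l) :
    -- (1) Probabilistic λ-Independence implies λ-Independence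
    ((∀ (m m' : ∀ j, M j) (l : Λ),
        (0 < ∑ ob : ∀ j, O j, ∑ l' : Λ, q m ob l') →
        (0 < ∑ ob : ∀ j, O j, ∑ l' : Λ, q m' ob l') →
        (∑ ob : ∀ j, O j, q m ob l) / (∑ ob : ∀ j, O j, ∑ l' : Λ, q m ob l')
          = (∑ ob : ∀ j, O j, q m' ob l) /
            (∑ ob : ∀ j, O j, ∑ l' : Λ, q m' ob l')) →
      ∀ (m m' : ∀ j, M j) (l : Λ),
        (∃ (ob : ∀ j, O j) (l' : Λ), h m' ob l') →
        (∃ ob : ∀ j, O j, h m ob l) →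
        ∃ ob : ∀ j, O j, h m' ob l) ∧
    -- (2) Probabilistic Outcome Independence implies Outcome Independence
    ((∀ (m : ∀ j, M j) (i : Fin n) (o : O i) (ob' : ∀ j, O j) (l : Λ),
        (0 < ∑ ob : ∀ j, O j, q m ob l) →
        (0 < ∑ o'' : O i, q m (Function.update ob' i o'') l) →
        (∑ ob : ∀ j, O j, if ob i = o then q m ob l else 0) /
            (∑ ob : ∀ j, O j, q m ob l)
          = q m (Function.update ob' i o) l /
            (∑ o'' : O i, q m (Function.update ob' i o'') l)) →
      ∀ (m : ∀ j, M j) (i : Fin n) (o o' : ∀ j, O j) (l : Λ),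
        h m o l → h m o' l → h m (Function.update o' i (o i)) l) ∧
    -- (3) Probabilistic Parameter Independence implies Parameter Independence
    ((∀ (i : Fin n) (o : O i) (m : ∀ j, M j) (l : Λ),
        (0 < ∑ ob : ∀ j, O j, q m ob l) →
        (∑ ob : ∀ j, O j, if ob i = o then q m ob l else 0) /
            (∑ ob : ∀ j, O j, q m ob l)
          = (∑ m' : ∀ j, M j, if m' i = m i then
                (∑ ob : ∀ j, O j, if ob i = o then q m' ob l else 0) else 0) /
            (∑ m' : ∀ j, M j, if m' i = m i then
                (∑ ob : ∀ j, O j, q m' ob l) else 0)) →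
      ∀ (i : Fin n) (m m' : ∀ j, M j), m i = m' i → ∀ (o : O i) (l : Λ),
        (∃ ob : ∀ j, O j, ob i = o ∧ h m ob l) →
        (∃ ob : ∀ j, O j, h m' ob l) →
        ∃ ob : ∀ j, O j, ob i = o ∧ h m' ob l) ∧
    -- (4) Probabilistic Locality implies Locality
    ((∀ (m : ∀ j, M j) (o : ∀ j, O j) (l : Λ),
        (0 < ∑ ob : ∀ j, O j, q m ob l) →
        q m o l / (∑ ob : ∀ j, O j, q m ob l)
          = ∏ i : Fin n,
              ((∑ m' : ∀ j, M j, if m' i = m i then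
                  (∑ ob : ∀ j, O j, if ob i = o i then q m' ob l else 0) else 0) /
               (∑ m' : ∀ j, M j, if m' i = m i then
                  (∑ ob : ∀ j, O j, q m' ob l) else 0))) →
      ∀ (m : ∀ j, M j) (o : ∀ j, O j) (l : Λ),
        (∃ ob : ∀ j, O j, h m ob l) →
        (∀ i : Fin n, ∃ (m' : ∀ j, M j) (o' : ∀ j, O j),
            m' i = m i ∧ o' i = o i ∧ h m' o' l) →
        h m o l) := by
  simp only [hcol]
  exact ⟨lambdaIndependence_of_prob hpos, outcomeIndependence_of_prob hpos,
    parameterIndependence_of_prob hpos, locality_of_prob hpos⟩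

/-- The possibilistic collapse preserves the four hidden-variable properties:
Probabilistic λ-Independence, Outcome Independence, Parameter Independence
and Locality each imply their relational counterparts for the collapse. -/
theorem stmt_14 {n : ℕ} (hn : 1 ≤ n) (M O : Fin n → Type) (Λ : Type)
    [∀ i, Fintype (M i)] [∀ i, Fintype (O i)] [Fintype Λ]
    [∀ i, DecidableEq (M i)] [∀ i, DecidableEq (O i)]
    (q : (∀ i, M i) → (∀ i, O i) → Λ → ℝ)
    -- q is a probability distribution on M × O × Λ
    (hpos : ∀ m o l, 0 ≤ q m o l)
    (hsum : ∑ m : ∀ i, M i, ∑ o : ∀ i, O i, ∑ l : Λ, q m o l = 1)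
    (h : (∀ i, M i) → (∀ i, O i) → Λ → Prop)
    -- h is the possibilistic collapse of q
    (hcol : ∀ m o l, h m o l ↔ 0 < q m o l) :
    -- (1) Probabilistic λ-Independence implies λ-Independence
    ((∀ (m m' : ∀ j, M j) (l : Λ),
        (0 < ∑ ob : ∀ j, O j, ∑ l' : Λ, q m ob l') →
        (0 < ∑ ob : ∀ j, O j, ∑ l' : Λ, q m' ob l') →
        (∑ ob : ∀ j, O j, q m ob l) / (∑ ob : ∀ j, O j, ∑ l' : Λ, q m ob l')
          = (∑ ob : ∀ j, O j, q m' ob l) /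
            (∑ ob : ∀ j, O j, ∑ l' : Λ, q m' ob l')) →
      ∀ (m m' : ∀ j, M j) (l : Λ),
        (∃ (ob : ∀ j, O j) (l' : Λ), h m' ob l') →
        (∃ ob : ∀ j, O j, h m ob l) →
        ∃ ob : ∀ j, O j, h m' ob l) ∧
    -- (2) Probabilistic Outcome Independence implies Outcome Independence
    ((∀ (m : ∀ j, M j) (i : Fin n) (o : O i) (ob' : ∀ j, O j) (l : Λ),
        (0 < ∑ ob : ∀ j, O j, q m ob l) →
        (0 < ∑ o'' : O i, q m (Function.update ob' i o'') l) →
        (∑ ob : ∀ j, O j, if ob i = o then q m ob l else 0) /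
            (∑ ob : ∀ j, O j, q m ob l)
          = q m (Function.update ob' i o) l /
            (∑ o'' : O i, q m (Function.update ob' i o'') l)) →
      ∀ (m : ∀ j, M j) (i : Fin n) (o o' : ∀ j, O j) (l : Λ),
        h m o l → h m o' l → h m (Function.update o' i (o i)) l) ∧
    -- (3) Probabilistic Parameter Independence implies Parameter Independence
    ((∀ (i : Fin n) (o : O i) (m : ∀ j, M j) (l : Λ),
        (0 < ∑ ob : ∀ j, O j, q m ob l) →
        (∑ ob : ∀ j, O j, if ob i = o then q m ob l else 0) /
            (∑ ob : ∀ j, O j, q m ob l)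
          = (∑ m' : ∀ j, M j, if m' i = m i then
                (∑ ob : ∀ j, O j, if ob i = o then q m' ob l else 0) else 0) /
            (∑ m' : ∀ j, M j, if m' i = m i then
                (∑ ob : ∀ j, O j, q m' ob l) else 0)) →
      ∀ (i : Fin n) (m m' : ∀ j, M j), m i = m' i → ∀ (o : O i) (l : Λ),
        (∃ ob : ∀ j, O j, ob i = o ∧ h m ob l) →
        (∃ ob : ∀ j, O j, h m' ob l) →
        ∃ ob : ∀ j, O j, ob i = o ∧ h m' ob l) ∧
    -- (4) Probabilistic Locality implies Locality
    ((∀ (m : ∀ j, M j) (o : ∀ j, O j) (l : Λ),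
        (0 < ∑ ob : ∀ j, O j, q m ob l) →
        q m o l / (∑ ob : ∀ j, O j, q m ob l)
          = ∏ i : Fin n,
              ((∑ m' : ∀ j, M j, if m' i = m i then
                  (∑ ob : ∀ j, O j, if ob i = o i then q m' ob l else 0) else 0) /
               (∑ m' : ∀ j, M j, if m' i = m i then
                  (∑ ob : ∀ j, O j, q m' ob l) else 0))) →
      ∀ (m : ∀ j, M j) (o : ∀ j, O j) (l : Λ),
        (∃ ob : ∀ j, O j, h m ob l) →
        (∀ i : Fin n, ∃ (m' : ∀ j, M j) (o' : ∀ j, O j),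
            m' i = m i ∧ o' i = o i ∧ h m' o' l) →
        h m o l) :=
  stmt_14_general M O Λ q hpos h hcol
end

section
/- Consider the bipartite system type with M_1 = {X_1,X_2}, M_2 = {Y_1,Y_2}, O_1 = {a_1,a_2}, O_2 = {b_1,b_2}, and the empirical model e given by: e((X_1,Y_1),·) holds exactly on {(a_1,b_1),(a_1,b_2),(a_2,b_2)}; e((X_1,Y_2),·) exactly on {(a_1,b_1),(a_2,b_1),(a_2,b_2)}; e((X_2,Y_1),·) exactly on {(a_1,b_1),(a_2,b_1),(a_2,b_2)}; e((X_2,Y_2),·) exactly on {(a_1,b_1),(a_1,b_2),(a_2,b_2)}. Then e satisfies No-Signalling, but there is no probabilistic empirical model p satisfying Probabilistic No-Signalling whose possibilistic collapse is e. -/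
/-!
Every context of `e` contains both diagonal outcomes `(a₁,b₁)` and `(a₂,b₂)`, which already
witnesses No-Signalling. For a probabilistic model, write `A_x` and `B_y` for the PNS-determined
probabilities of `a₁` under `X_x` and of `b₁` under `Y_y`. In each context
`A - B = p(a₁,b₂) - p(a₂,b₁)` (up to normalisation), and exactly one of these two outcomes is
possible, so the four contexts give the cycle `B₁ < A₁ < B₂ < A₂ < B₁`.
-/

open Finset

/-- The paper's `p(o | m̄)`, for `q = p m̄`. -/
noncomputable def condMarginal {n : ℕ} {β : Type*} [Fintype β] [DecidableEq β]
    (q : (Fin n → β) → ℝ) (i : Fin n) (o : β) : ℝ :=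
  (∑ ob, if ob i = o then q ob else 0) / ∑ ob, q ob

lemma condMarginal_fst_sub_snd (q : (Fin 2 → Bool) → ℝ) :
    condMarginal q 0 false - condMarginal q 1 false
      = (q ![false, true] - q ![true, false]) / ∑ ob, q ob := by
  rw [condMarginal, condMarginal, ← sub_div,
    show (univ : Finset (Fin 2 → Bool))
      = {![false, false], ![false, true], ![true, false], ![true, true]} by decide]
  simp

lemma condMarginal_snd_lt_fst_iff {q : (Fin 2 → Bool) → ℝ} (hq : 0 < ∑ ob, q ob) :
    condMarginal q 1 false < condMarginal q 0 false ↔ q ![true, false] < q ![false, true] := by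
  rw [← sub_pos, condMarginal_fst_sub_snd, div_pos_iff_of_pos_right hq, sub_pos]

lemma condMarginal_fst_lt_snd_iff {q : (Fin 2 → Bool) → ℝ} (hq : 0 < ∑ ob, q ob) :
    condMarginal q 0 false < condMarginal q 1 false ↔ q ![false, true] < q ![true, false] := by
  rw [← sub_pos, ← neg_sub, condMarginal_fst_sub_snd, ← neg_div, neg_sub,
    div_pos_iff_of_pos_right hq, sub_pos]

lemma diag_outcome_mem {e : (Fin 2 → Bool) → (Fin 2 → Bool) → Prop}
    (he1 : ∀ o, e ![false, false] o ↔ o ≠ ![true, false])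
    (he2 : ∀ o, e ![false, true] o ↔ o ≠ ![false, true])
    (he3 : ∀ o, e ![true, false] o ↔ o ≠ ![false, true])
    (he4 : ∀ o, e ![true, true] o ↔ o ≠ ![true, false]) (m : Fin 2 → Bool) (b : Bool) :
    e m ![b, b] := by
  obtain rfl | rfl | rfl | rfl : m = ![false, false] ∨ m = ![false, true] ∨
      m = ![true, false] ∨ m = ![true, true] := by revert m; decide
  all_goals cases b <;> simp [he1, he2, he3, he4]

/-- There is a bipartite relational model satisfying No-Signalling which is
not the possibilistic collapse of any probabilistic model satisfying
Probabilistic No-Signalling.  Measurements X₁,Y₁ are encoded as false and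
X₂,Y₂ as true; outcomes a₁,b₁ as false and a₂,b₂ as true. -/
theorem stmt_16 (e : (Fin 2 → Bool) → (Fin 2 → Bool) → Prop)
    -- e((X₁,Y₁),·) holds exactly on {(a₁,b₁),(a₁,b₂),(a₂,b₂)}
    (he1 : ∀ o, e ![false, false] o ↔ o ≠ ![true, false])
    -- e((X₁,Y₂),·) holds exactly on {(a₁,b₁),(a₂,b₁),(a₂,b₂)}
    (he2 : ∀ o, e ![false, true] o ↔ o ≠ ![false, true])
    -- e((X₂,Y₁),·) holds exactly on {(a₁,b₁),(a₂,b₁),(a₂,b₂)}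
    (he3 : ∀ o, e ![true, false] o ↔ o ≠ ![false, true])
    -- e((X₂,Y₂),·) holds exactly on {(a₁,b₁),(a₁,b₂),(a₂,b₂)}
    (he4 : ∀ o, e ![true, true] o ↔ o ≠ ![true, false]) :
    -- e satisfies No-Signalling
    (∀ (i : Fin 2) (m m' : Fin 2 → Bool), m i = m' i → ∀ o : Bool,
        (∃ ob : Fin 2 → Bool, ob i = o ∧ e m ob) →
        (∃ ob : Fin 2 → Bool, e m' ob) →
        ∃ ob : Fin 2 → Bool, ob i = o ∧ e m' ob) ∧
    -- but no probabilistic model satisfying PNS has e as its collapse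
    ¬ ∃ p : (Fin 2 → Bool) → (Fin 2 → Bool) → ℝ,
        (∀ m o, 0 ≤ p m o) ∧
        (∑ m : Fin 2 → Bool, ∑ o : Fin 2 → Bool, p m o = 1) ∧
        -- Probabilistic No-Signalling
        (∀ (i : Fin 2) (m m' : Fin 2 → Bool), m i = m' i → ∀ o : Bool,
            (0 < ∑ ob : Fin 2 → Bool, p m ob) →
            (0 < ∑ ob : Fin 2 → Bool, p m' ob) →
            (∑ ob : Fin 2 → Bool, if ob i = o then p m ob else 0) /
                (∑ ob : Fin 2 → Bool, p m ob)
              = (∑ ob : Fin 2 → Bool, if ob i = o then p m' ob else 0) /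
                (∑ ob : Fin 2 → Bool, p m' ob)) ∧
        -- the possibilistic collapse of p is e
        (∀ m o, 0 < p m o ↔ e m o) := by
  have hdiag := diag_outcome_mem he1 he2 he3 he4
  refine ⟨fun i _ m' _ o _ _ => ⟨![o, o], by fin_cases i <;> rfl, hdiag m' o⟩, ?_⟩
  rintro ⟨p, hp, -, hns, hcol⟩
  have hgap : ∀ m o o', ¬ e m o → e m o' → p m o < p m o' := fun m o o' ho ho' =>
    ((hp m o).eq_of_not_lt (mt (hcol m o).1 ho)).symm ▸ (hcol m o').2 ho'
  have htot : ∀ m, 0 < ∑ ob, p m ob := fun m =>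
    sum_pos' (fun ob _ => hp m ob) ⟨_, mem_univ _, (hcol m _).2 (hdiag m false)⟩
  have hA1 := hns 0 ![false, false] ![false, true] rfl false (htot _) (htot _)
  have hA2 := hns 0 ![true, false] ![true, true] rfl false (htot _) (htot _)
  have hB1 := hns 1 ![false, false] ![true, false] rfl false (htot _) (htot _)
  have hB2 := hns 1 ![false, true] ![true, true] rfl false (htot _) (htot _)
  have h11 := (condMarginal_snd_lt_fst_iff (htot ![false, false])).2
    (hgap _ _ _ (by simp [he1]) (by simp [he1]))
  have h12 := (condMarginal_fst_lt_snd_iff (htot ![false, true])).2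
    (hgap _ _ _ (by simp [he2]) (by simp [he2]))
  have h21 := (condMarginal_fst_lt_snd_iff (htot ![true, false])).2
    (hgap _ _ _ (by simp [he3]) (by simp [he3]))
  have h22 := (condMarginal_snd_lt_fst_iff (htot ![true, true])).2
    (hgap _ _ _ (by simp [he4]) (by simp [he4]))
  simp only [condMarginal] at h11 h12 h21 h22
  linarith
end

section
/- Let h be a nonempty relational hidden-variable model over finite sets satisfying Measurement Locality, λ-Independence, and Locality. Define L = #{λ : h(λ)↓}, N = #{m̄ : h(m̄)↓}, K_{m̄,λ} = #{ō : h(m̄,ō,λ)}, W_{m̄,λ} = K_{m̄,λ}·L·N, and define q^h : M × O × Λ → [0,1] by q^h(m̄,ō,λ) = 1/W_{m̄,λ} if h(m̄,ō,λ) holds and q^h(m̄,ō,λ) = 0 otherwise. Then q^h is a probabilistic hidden-variable model (its total sum is 1), its possibilistic collapse is h, and q^h satisfies Probabilistic Measurement Locality, Probabilistic λ-Independence, and Probabilistic Locality. -/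
/-!
Measurement Locality and Locality make the support of `h(·, ·, λ)` the product of the local
supports `h(m_j, o_j, λ)↓`; Measurement Locality and λ-Independence make the set of possible
measurements the product of the locally possible ones. So `q^h(·, ·, λ)` is `(LN)⁻¹` times a
product of local weights, uniform over the locally possible outcomes, and `q^h(m̄) = 1/N` is a
product of uniform distributions. Marginals and conditionals of product weights are computed
coordinatewise, which gives PML and PL. λ-Independence also makes `h(m̄, λ)↓` equivalent to
`h(λ)↓` once `h(m̄)↓`, so `q^h(λ | m̄) = 1/L` for every possible `m̄`, which is PλI.
-/

open Finset Function

section ProductWeights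

variable {ι : Type*} [Fintype ι] [DecidableEq ι] {X Y : ι → Type*}
  [∀ i, Fintype (X i)] [∀ i, DecidableEq (X i)] [∀ i, Fintype (Y i)] [∀ i, DecidableEq (Y i)]

theorem sum_mul_ite_apply_eq_mul_prod_erase {R : Type*} [CommSemiring R] (i : ι) (g : X i → R)
    (f : ∀ j, X j → R) (a : X i) :
    ∑ x : ∀ j, X j, g (x i) * (if x i = a then ∏ j ∈ univ.erase i, f j (x j) else 0) =
      g a * ∏ j ∈ univ.erase i, ∑ b, f j b := by
  have hupdate : ∀ x : ∀ j, X j,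
      ∏ j, update f i g j (x j) = g (x i) * ∏ j ∈ univ.erase i, f j (x j) := fun x => by
    rw [← mul_prod_erase _ _ (mem_univ i), update_self]
    congr 1
    exact Finset.prod_congr rfl fun j hj => by rw [update_of_ne (ne_of_mem_erase hj)]
  calc _ = ∑ x ∈ Fintype.piFinset (update (fun j => (univ : Finset (X j))) i {a}),
        ∏ j, update f i g j (x j) := by
        rw [Fintype.piFinset_update_singleton_eq_filter_piFinset_eq (fun j => univ) i (mem_univ a),
          Fintype.piFinset_univ (β := X), sum_filter]
        simp only [hupdate, mul_ite_zero]
    _ = ∏ j, ∑ b ∈ update (fun j => (univ : Finset (X j))) i {a} j, update f i g j b :=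
        (prod_univ_sum _ _).symm
    _ = _ := by
        rw [← mul_prod_erase _ _ (mem_univ i)]
        simp only [update_self, sum_singleton]
        congr 1
        exact Finset.prod_congr rfl fun j hj => by simp only [update_of_ne (ne_of_mem_erase hj)]

theorem sum_ite_apply_prod_eq_mul_prod_erase {R : Type*} [CommSemiring R]
    (f : ∀ j, X j → R) (i : ι) (a : X i) :
    ∑ x : ∀ j, X j, (if x i = a then ∏ j, f j (x j) else 0) =
      f i a * ∏ j ∈ univ.erase i, ∑ b, f j b := by
  simp only [← mul_prod_erase _ _ (mem_univ i), ← mul_ite_zero]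
  exact sum_mul_ite_apply_eq_mul_prod_erase i (f i) f a

theorem eq_prod_sum_ite_apply_of_eq_prod {R : Type*} [CommSemiring R] {w : (∀ j, X j) → R}
    {u : ∀ j, X j → R} (hw : ∀ x, w x = ∏ j, u j (x j)) (hu : ∀ j, ∑ b, u j b = 1)
    (x : ∀ j, X j) :
    w x = ∏ i, ∑ x', if x' i = x i then w x' else 0 := by
  simp only [hw, sum_ite_apply_prod_eq_mul_prod_erase, hu, prod_const_one, mul_one]

theorem div_sum_eq_prod_of_eq_mul_prod {R : Type*} [Field R] {w : (∀ j, X j) → (∀ j, Y j) → R}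
    {C : R} {G : ∀ j, X j → Y j → R} (hw : ∀ x y, w x y = C * ∏ j, G j (x j) (y j))
    (hC : C ≠ 0) (hG : ∀ j, ∑ a, ∑ b, G j a b ≠ 0) (x : ∀ j, X j) (y : ∀ j, Y j) :
    w x y / ∑ y', w x y' =
      ∏ i, ((∑ x', if x' i = x i then (∑ y', if y' i = y i then w x' y' else 0) else 0) /
        (∑ x', if x' i = x i then ∑ y', w x' y' else 0)) := by
  have hsum : ∀ x', ∑ y', w x' y' = C * ∏ j, ∑ b, G j (x' j) b := fun x' => by
    simp only [hw, ← mul_sum, ← Fintype.prod_sum]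
  have hpin : ∀ i x' b, ∑ y', (if y' i = b then w x' y' else 0) =
      C * (G i (x' i) b * ∏ j ∈ univ.erase i, ∑ b, G j (x' j) b) := fun i x' b => by
    simp only [hw, ← mul_ite_zero, ← mul_sum, sum_ite_apply_prod_eq_mul_prod_erase]
  rw [hsum, hw, mul_div_mul_left _ _ hC, ← prod_div_distrib]
  refine Finset.prod_congr rfl fun i _ => ?_
  have hE : ∏ j ∈ univ.erase i, ∑ a, ∑ b, G j a b ≠ 0 := prod_ne_zero_iff.mpr fun j _ => hG j
  have hnum : (∑ x', if x' i = x i then (∑ y', if y' i = y i then w x' y' else 0) else 0) =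
      C * (G i (x i) (y i) * ∏ j ∈ univ.erase i, ∑ a, ∑ b, G j a b) := by
    simp only [hpin, ← mul_ite_zero, ← mul_sum]
    exact congrArg (C * ·)
      (sum_mul_ite_apply_eq_mul_prod_erase i (fun a => G i a (y i)) (fun j a => ∑ b, G j a b) (x i))
  have hden : (∑ x', if x' i = x i then ∑ y', w x' y' else 0) =
      C * ((∑ b, G i (x i) b) * ∏ j ∈ univ.erase i, ∑ a, ∑ b, G j a b) := by
    simp only [hsum, ← mul_ite_zero, ← mul_sum]
    exact congrArg (C * ·)
      (sum_ite_apply_prod_eq_mul_prod_erase (fun j a => ∑ b, G j a b) i (x i))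
  rw [hnum, hden, mul_div_mul_left _ _ hC, mul_div_mul_right _ _ hE]

end ProductWeights

theorem sum_ite_eq_natCard_mul {α R : Type*} [Fintype α] [Semiring R] (p : α → Prop)
    [DecidablePred p] (c : R) : ∑ x, (if p x then c else 0) = Nat.card {x // p x} * c := by
  rw [← sum_filter, sum_const, nsmul_eq_mul, Nat.card_eq_fintype_card, Fintype.card_subtype]

theorem natCard_eq_sum_ite {α R : Type*} [Fintype α] [Semiring R] (p : α → Prop)
    [DecidablePred p] : (Nat.card {x // p x} : R) = ∑ x, if p x then 1 else 0 := by
  rw [sum_ite_eq_natCard_mul, mul_one]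

theorem natCard_subtype_pos {α : Type*} [Finite α] {p : α → Prop} {x : α} (hx : p x) :
    (0 : ℝ) < Nat.card {x // p x} :=
  have : Nonempty {x // p x} := ⟨⟨x, hx⟩⟩
  Nat.cast_pos.mpr Nat.card_pos

namespace HiddenVariableModel

section General

variable {M O Λ : Type*} (h : M → O → Λ → Prop)

def LambdaIndependence : Prop :=
  ∀ (m m' : M) (l : Λ), (∃ o l', h m' o l') → (∃ o, h m o l) → ∃ o, h m' o l

-- `K_{m̄,λ}`, `L` and `N`.
noncomputable def outcomeCount (m : M) (l : Λ) : ℝ := Nat.card {o // h m o l}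

noncomputable def hiddenCount : ℝ := Nat.card {l // ∃ m o, h m o l}

noncomputable def measurementCount : ℝ := Nat.card {m // ∃ o l, h m o l}

open Classical in
noncomputable def canonicalModel (m : M) (o : O) (l : Λ) : ℝ :=
  if h m o l then 1 / (outcomeCount h m l * hiddenCount h * measurementCount h) else 0

def ProbLambdaIndependence [Fintype O] [Fintype Λ] (q : M → O → Λ → ℝ) : Prop :=
  ∀ (m m' : M) (l : Λ), (0 < ∑ o, ∑ l', q m o l') → (0 < ∑ o, ∑ l', q m' o l') →
    (∑ o, q m o l) / (∑ o, ∑ l', q m o l') = (∑ o, q m' o l) / (∑ o, ∑ l', q m' o l')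

variable {h}

theorem LambdaIndependence.exists_outcome_iff (hLI : LambdaIndependence h) {m : M}
    (hm : ∃ o l, h m o l) (l : Λ) : (∃ o, h m o l) ↔ ∃ m' o, h m' o l :=
  ⟨fun ⟨o, hmol⟩ => ⟨m, o, hmol⟩, fun ⟨m', o, hmol⟩ => hLI m' m l hm ⟨o, hmol⟩⟩

theorem outcomeCount_pos [Finite O] {m o l} (hmol : h m o l) : 0 < outcomeCount h m l :=
  natCard_subtype_pos hmol

theorem hiddenCount_pos [Finite Λ] {m o l} (hmol : h m o l) : 0 < hiddenCount h :=
  natCard_subtype_pos ⟨m, o, hmol⟩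

theorem measurementCount_pos [Finite M] {m o l} (hmol : h m o l) : 0 < measurementCount h :=
  natCard_subtype_pos ⟨o, l, hmol⟩

theorem canonicalModel_pos_iff [Finite M] [Finite O] [Finite Λ] (m : M) (o : O) (l : Λ) :
    0 < canonicalModel h m o l ↔ h m o l := by
  by_cases hmol : h m o l
  · rw [canonicalModel, if_pos hmol]
    exact iff_of_true (one_div_pos.mpr (mul_pos (mul_pos (outcomeCount_pos hmol)
      (hiddenCount_pos hmol)) (measurementCount_pos hmol))) hmol
  · rw [canonicalModel, if_neg hmol]
    exact iff_of_false (lt_irrefl 0) hmol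

open Classical in
theorem sum_canonicalModel_outcome [Fintype O] (m : M) (l : Λ) :
    ∑ o, canonicalModel h m o l =
      if ∃ o, h m o l then (hiddenCount h * measurementCount h)⁻¹ else 0 := by
  split_ifs with hml
  · obtain ⟨o, hmol⟩ := hml
    simp only [canonicalModel, sum_ite_eq_natCard_mul]
    rw [mul_one_div, mul_assoc]
    exact div_mul_cancel_left₀ (outcomeCount_pos hmol).ne' _
  · exact sum_eq_zero fun o _ => if_neg fun hmol => hml ⟨o, hmol⟩

open Classical in
theorem sum_sum_canonicalModel [Fintype O] [Fintype Λ] (hLI : LambdaIndependence h) (m : M) :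
    ∑ o, ∑ l, canonicalModel h m o l = if ∃ o l, h m o l then (measurementCount h)⁻¹ else 0 := by
  rw [sum_comm]
  simp only [sum_canonicalModel_outcome]
  split_ifs with hm
  · obtain ⟨o, l, hmol⟩ := hm
    simp only [hLI.exists_outcome_iff ⟨o, l, hmol⟩, sum_ite_eq_natCard_mul]
    rw [mul_inv]
    exact mul_inv_cancel_left₀ (hiddenCount_pos hmol).ne' _
  · exact sum_eq_zero fun l _ => if_neg fun ⟨o, hmol⟩ => hm ⟨o, l, hmol⟩

theorem sum_canonicalModel [Fintype M] [Fintype O] [Fintype Λ] (hLI : LambdaIndependence h)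
    (hne : ∃ m o l, h m o l) : ∑ m, ∑ o, ∑ l, canonicalModel h m o l = 1 := by
  classical
  obtain ⟨m, o, l, hmol⟩ := hne
  simp only [sum_sum_canonicalModel hLI, sum_ite_eq_natCard_mul]
  exact mul_inv_cancel₀ (measurementCount_pos hmol).ne'

theorem probLambdaIndependence_canonicalModel [Fintype O] [Fintype Λ]
    (hLI : LambdaIndependence h) : ProbLambdaIndependence (canonicalModel h) := by
  classical
  have hcond : ∀ m l, 0 < ∑ o, ∑ l', canonicalModel h m o l' →
      (∑ o, canonicalModel h m o l) / (∑ o, ∑ l', canonicalModel h m o l') =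
        (if ∃ m' o, h m' o l then (hiddenCount h * measurementCount h)⁻¹ else 0) /
          (measurementCount h)⁻¹ := by
    intro m l hpos
    rw [sum_sum_canonicalModel hLI] at hpos ⊢
    have hm : ∃ o l, h m o l := by
      by_contra hm
      rw [if_neg hm] at hpos
      exact lt_irrefl 0 hpos
    rw [sum_canonicalModel_outcome, if_pos hm]
    simp only [hLI.exists_outcome_iff hm]
  intro m m' l hm hm'
  rw [hcond m l hm, hcond m' l hm']

end General

section Product

variable {ι : Type*} {M O : ι → Type*} {Λ : Type*} (h : (∀ i, M i) → (∀ i, O i) → Λ → Prop)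

def MeasurementLocality : Prop :=
  ∀ (m : ∀ j, M j) (l : Λ),
    (∃ o : ∀ j, O j, h m o l) ↔ ∀ i, ∃ (m' : ∀ j, M j) (o' : ∀ j, O j), m' i = m i ∧ h m' o' l

def Locality : Prop :=
  ∀ (m : ∀ j, M j) (o : ∀ j, O j) (l : Λ), (∃ ob : ∀ j, O j, h m ob l) →
    (∀ i, ∃ (m' : ∀ j, M j) (o' : ∀ j, O j), m' i = m i ∧ o' i = o i ∧ h m' o' l) → h m o l

-- `h(a, b, λ)↓` for `a ∈ M_j`, `b ∈ O_j`.
def LocalSupport (l : Λ) (j : ι) (a : M j) (b : O j) : Prop :=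
  ∃ (m : ∀ i, M i) (o : ∀ i, O i), m j = a ∧ o j = b ∧ h m o l

open Classical in
noncomputable def localWeight (l : Λ) (j : ι) (a : M j) (b : O j) : ℝ :=
  if LocalSupport h l j a b then (Nat.card {b' // LocalSupport h l j a b'} : ℝ)⁻¹ else 0

def ProbMeasurementLocality [Fintype ι] [DecidableEq ι] [∀ i, Fintype (M i)]
    [∀ i, DecidableEq (M i)] [∀ i, Fintype (O i)] [Fintype Λ]
    (q : (∀ i, M i) → (∀ i, O i) → Λ → ℝ) : Prop :=
  ∀ m : ∀ i, M i, (∑ o, ∑ l, q m o l) =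
    ∏ i, ∑ m' : ∀ j, M j, if m' i = m i then ∑ o, ∑ l, q m' o l else 0

def ProbLocality [Fintype ι] [DecidableEq ι] [∀ i, Fintype (M i)] [∀ i, DecidableEq (M i)]
    [∀ i, Fintype (O i)] [∀ i, DecidableEq (O i)] (q : (∀ i, M i) → (∀ i, O i) → Λ → ℝ) : Prop :=
  ∀ (m : ∀ j, M j) (o : ∀ j, O j) (l : Λ), (0 < ∑ ob, q m ob l) →
    q m o l / (∑ ob, q m ob l) =
      ∏ i, ((∑ m' : ∀ j, M j, if m' i = m i then
          (∑ ob : ∀ j, O j, if ob i = o i then q m' ob l else 0) else 0) /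
        (∑ m' : ∀ j, M j, if m' i = m i then (∑ ob, q m' ob l) else 0))

variable {h}

theorem mem_iff_forall_localSupport (hML : MeasurementLocality h) (hL : Locality h)
    (m : ∀ j, M j) (o : ∀ j, O j) (l : Λ) : h m o l ↔ ∀ i, LocalSupport h l i (m i) (o i) := by
  refine ⟨fun hmol i => ⟨m, o, rfl, rfl, hmol⟩, fun hloc => hL m o l ?_ hloc⟩
  exact (hML m l).2 fun i =>
    let ⟨m', o', hm', _, hmol'⟩ := hloc i
    ⟨m', o', hm', hmol'⟩

theorem exists_iff_forall_exists (hML : MeasurementLocality h) (hLI : LambdaIndependence h)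
    {l₀ : Λ} (hl₀ : ∃ m o, h m o l₀) (m : ∀ j, M j) :
    (∃ o l, h m o l) ↔ ∀ i, ∃ m' : ∀ j, M j, m' i = m i ∧ ∃ o l, h m' o l := by
  refine ⟨fun hm i => ⟨m, rfl, hm⟩, fun hloc => ?_⟩
  obtain ⟨o, hmol⟩ := (hML m l₀).2 fun i => by
    obtain ⟨m', hm', hm'supp⟩ := hloc i
    obtain ⟨o', hmol'⟩ := (hLI.exists_outcome_iff hm'supp l₀).2 hl₀
    exact ⟨m', o', hm', hmol'⟩
  exact ⟨o, l₀, hmol⟩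

theorem localWeight_pos [∀ i, Finite (O i)] {l : Λ} {j : ι} {a : M j} {b : O j}
    (hab : LocalSupport h l j a b) : 0 < localWeight h l j a b := by
  rw [localWeight, if_pos hab]
  exact inv_pos.mpr (natCard_subtype_pos hab)

theorem localWeight_nonneg (l : Λ) (j : ι) (a : M j) (b : O j) : 0 ≤ localWeight h l j a b := by
  unfold localWeight
  split_ifs <;> positivity

theorem sum_sum_localWeight_pos [∀ i, Fintype (M i)] [∀ i, Fintype (O i)] {l : Λ} {j : ι}
    {a : M j} {b : O j} (hab : LocalSupport h l j a b) : 0 < ∑ a, ∑ b, localWeight h l j a b :=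
  calc 0 < localWeight h l j a b := localWeight_pos hab
    _ ≤ ∑ b, localWeight h l j a b :=
      single_le_sum (fun b _ => localWeight_nonneg l j a b) (mem_univ b)
    _ ≤ ∑ a, ∑ b, localWeight h l j a b :=
      single_le_sum (f := fun a => ∑ b, localWeight h l j a b)
        (fun a _ => sum_nonneg fun b _ => localWeight_nonneg l j a b) (mem_univ a)

theorem canonicalModel_eq_mul_prod_localWeight [Fintype ι] [DecidableEq ι]
    [∀ i, Fintype (O i)] (hML : MeasurementLocality h) (hL : Locality h) (l : Λ)
    (m : ∀ i, M i) (o : ∀ i, O i) :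
    canonicalModel h m o l =
      (hiddenCount h * measurementCount h)⁻¹ * ∏ j, localWeight h l j (m j) (o j) := by
  classical
  have hK : outcomeCount h m l = ∏ j, (Nat.card {b // LocalSupport h l j (m j) b} : ℝ) := by
    simp only [outcomeCount, natCard_eq_sum_ite, mem_iff_forall_localSupport hML hL,
      ← Fintype.prod_boole, Fintype.prod_sum]
  by_cases hmol : h m o l
  · have hloc := (mem_iff_forall_localSupport hML hL m o l).1 hmol
    simp only [canonicalModel, localWeight, if_pos hmol, if_pos (hloc _), prod_inv_distrib, ← hK]
    ring
  · obtain ⟨j, hj⟩ : ∃ j, ¬ LocalSupport h l j (m j) (o j) := by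
      simpa [mem_iff_forall_localSupport hML hL] using hmol
    rw [canonicalModel, if_neg hmol, prod_eq_zero (mem_univ j) (by rw [localWeight, if_neg hj]),
      mul_zero]

theorem probMeasurementLocality_canonicalModel [Fintype ι] [DecidableEq ι]
    [∀ i, Fintype (M i)] [∀ i, DecidableEq (M i)] [∀ i, Fintype (O i)] [Fintype Λ]
    (hML : MeasurementLocality h) (hLI : LambdaIndependence h) (hne : ∃ m o l, h m o l) :
    ProbMeasurementLocality (canonicalModel h) := by
  classical
  obtain ⟨m₀, o₀, l₀, hmol₀⟩ := hne
  set s : ∀ j, M j → ℝ := fun j a => if ∃ m : ∀ i, M i, m j = a ∧ ∃ o l, h m o l then 1 else 0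
  have hsupp : ∀ m, (if ∃ o l, h m o l then 1 else 0 : ℝ) = ∏ j, s j (m j) := fun m => by
    rw [Fintype.prod_boole]
    exact if_congr (exists_iff_forall_exists hML hLI ⟨m₀, o₀, hmol₀⟩ m) rfl rfl
  have hN : measurementCount h = ∏ j, ∑ a, s j a := by
    rw [measurementCount, natCard_eq_sum_ite, Fintype.prod_sum]
    exact sum_congr rfl fun m _ => hsupp m
  have hs : ∀ j, ∑ a, s j a ≠ 0 :=
    fun j => prod_ne_zero_iff.mp (hN ▸ (measurementCount_pos hmol₀).ne') j (mem_univ j)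
  intro m
  refine eq_prod_sum_ite_apply_of_eq_prod (w := fun m => ∑ o, ∑ l, canonicalModel h m o l)
    (u := fun j a => s j a / ∑ b, s j b) (fun m => ?_) (fun j => ?_) m
  · rw [sum_sum_canonicalModel hLI, prod_div_distrib, ← hN, ← hsupp]
    split_ifs <;> simp
  · rw [← sum_div, div_self (hs j)]

theorem probLocality_canonicalModel [Fintype ι] [DecidableEq ι] [∀ i, Fintype (M i)]
    [∀ i, DecidableEq (M i)] [∀ i, Fintype (O i)] [∀ i, DecidableEq (O i)] [Finite Λ]
    (hML : MeasurementLocality h) (hL : Locality h) : ProbLocality (canonicalModel h) := by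
  classical
  intro m o l hpos
  obtain ⟨o₀, hmol₀⟩ : ∃ o, h m o l := by
    by_contra hml
    rw [sum_canonicalModel_outcome, if_neg hml] at hpos
    exact lt_irrefl 0 hpos
  exact div_sum_eq_prod_of_eq_mul_prod (w := fun m o => canonicalModel h m o l)
    (canonicalModel_eq_mul_prod_localWeight hML hL l)
    (inv_ne_zero (mul_pos (hiddenCount_pos hmol₀) (measurementCount_pos hmol₀)).ne')
    (fun j => (sum_sum_localWeight_pos (⟨m, o₀, rfl, rfl, hmol₀⟩ : LocalSupport h l j _ _)).ne') m o

end Product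

end HiddenVariableModel

theorem stmt_17_general {n : ℕ} (M O : Fin n → Type) (Λ : Type)
    [∀ i, Fintype (M i)] [∀ i, Fintype (O i)] [Fintype Λ]
    [∀ i, DecidableEq (M i)] [∀ i, DecidableEq (O i)]
    (h : (∀ i, M i) → (∀ i, O i) → Λ → Prop)
    -- h is nonempty
    (hne : ∃ (m : ∀ i, M i) (o : ∀ i, O i) (l : Λ), h m o l)
    -- Measurement Locality
    (hML : ∀ (m : ∀ j, M j) (l : Λ),
        (∃ o : ∀ j, O j, h m o l) ↔
        ∀ i : Fin n, ∃ (m' : ∀ j, M j) (o' : ∀ j, O j), m' i = m i ∧ h m' o' l)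
    -- λ-Independence
    (hLI : ∀ (m m' : ∀ j, M j) (l : Λ),
        (∃ (ob : ∀ j, O j) (l' : Λ), h m' ob l') →
        (∃ ob : ∀ j, O j, h m ob l) →
        ∃ ob : ∀ j, O j, h m' ob l)
    -- Locality
    (hL : ∀ (m : ∀ j, M j) (o : ∀ j, O j) (l : Λ),
        (∃ ob : ∀ j, O j, h m ob l) →
        (∀ i : Fin n, ∃ (m' : ∀ j, M j) (o' : ∀ j, O j),
            m' i = m i ∧ o' i = o i ∧ h m' o' l) →
        h m o l)
    (q : (∀ i, M i) → (∀ i, O i) → Λ → ℝ)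
    -- q = q^h : weight 1/(K_{m,λ}·L·N) on the support of h, 0 elsewhere
    (hq_pos : ∀ m o l, h m o l →
        q m o l = 1 /
          ((Nat.card {o' : ∀ i, O i // h m o' l} : ℝ) *
           (Nat.card {l' : Λ // ∃ (m' : ∀ i, M i) (o' : ∀ i, O i), h m' o' l'} : ℝ) *
           (Nat.card {m' : ∀ i, M i // ∃ (o' : ∀ i, O i) (l' : Λ), h m' o' l'} : ℝ)))
    (hq_zero : ∀ m o l, ¬ h m o l → q m o l = 0) :
    -- q is a probability distribution
    (∑ m : ∀ i, M i, ∑ o : ∀ i, O i, ∑ l : Λ, q m o l = 1) ∧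
    -- the possibilistic collapse of q is h
    (∀ m o l, 0 < q m o l ↔ h m o l) ∧
    -- Probabilistic Measurement Locality
    (∀ m : ∀ i, M i,
        (∑ o : ∀ i, O i, ∑ l : Λ, q m o l)
          = ∏ i : Fin n, (∑ m' : ∀ j, M j, if m' i = m i then
              (∑ o : ∀ j, O j, ∑ l : Λ, q m' o l) else 0)) ∧
    -- Probabilistic λ-Independence
    (∀ (m m' : ∀ j, M j) (l : Λ),
        (0 < ∑ o : ∀ j, O j, ∑ l' : Λ, q m o l') →
        (0 < ∑ o : ∀ j, O j, ∑ l' : Λ, q m' o l') →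
        (∑ o : ∀ j, O j, q m o l) / (∑ o : ∀ j, O j, ∑ l' : Λ, q m o l')
          = (∑ o : ∀ j, O j, q m' o l) /
            (∑ o : ∀ j, O j, ∑ l' : Λ, q m' o l')) ∧
    -- Probabilistic Locality
    (∀ (m : ∀ j, M j) (o : ∀ j, O j) (l : Λ),
        (0 < ∑ ob : ∀ j, O j, q m ob l) →
        q m o l / (∑ ob : ∀ j, O j, q m ob l)
          = ∏ i : Fin n,
              ((∑ m' : ∀ j, M j, if m' i = m i then
                  (∑ ob : ∀ j, O j, if ob i = o i then q m' ob l else 0) else 0) /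
               (∑ m' : ∀ j, M j, if m' i = m i then
                  (∑ ob : ∀ j, O j, q m' ob l) else 0))) := by
  open HiddenVariableModel in
  obtain rfl : q = canonicalModel h := by
    funext m o l
    unfold canonicalModel outcomeCount hiddenCount measurementCount
    split_ifs with hmol
    exacts [hq_pos m o l hmol, hq_zero m o l hmol]
  exact ⟨sum_canonicalModel hLI hne, canonicalModel_pos_iff,
    probMeasurementLocality_canonicalModel hML hLI hne, probLambdaIndependence_canonicalModel hLI,
    probLocality_canonicalModel hML hL⟩

/-- From a nonempty relational hidden-variable model h (over finite sets)
satisfying Measurement Locality, λ-Independence and Locality, the canonical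
probabilistic model q^h (uniform weights 1/(K_{m,λ}·L·N) on the support of h)
is a probability distribution whose possibilistic collapse is h, and it
satisfies Probabilistic Measurement Locality, Probabilistic λ-Independence,
and Probabilistic Locality. -/
theorem stmt_17 {n : ℕ} (hn : 1 ≤ n) (M O : Fin n → Type) (Λ : Type)
    [∀ i, Fintype (M i)] [∀ i, Fintype (O i)] [Fintype Λ]
    [∀ i, DecidableEq (M i)] [∀ i, DecidableEq (O i)]
    (h : (∀ i, M i) → (∀ i, O i) → Λ → Prop)
    -- h is nonempty
    (hne : ∃ (m : ∀ i, M i) (o : ∀ i, O i) (l : Λ), h m o l)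
    -- Measurement Locality
    (hML : ∀ (m : ∀ j, M j) (l : Λ),
        (∃ o : ∀ j, O j, h m o l) ↔
        ∀ i : Fin n, ∃ (m' : ∀ j, M j) (o' : ∀ j, O j), m' i = m i ∧ h m' o' l)
    -- λ-Independence
    (hLI : ∀ (m m' : ∀ j, M j) (l : Λ),
        (∃ (ob : ∀ j, O j) (l' : Λ), h m' ob l') →
        (∃ ob : ∀ j, O j, h m ob l) →
        ∃ ob : ∀ j, O j, h m' ob l)
    -- Locality
    (hL : ∀ (m : ∀ j, M j) (o : ∀ j, O j) (l : Λ),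
        (∃ ob : ∀ j, O j, h m ob l) →
        (∀ i : Fin n, ∃ (m' : ∀ j, M j) (o' : ∀ j, O j),
            m' i = m i ∧ o' i = o i ∧ h m' o' l) →
        h m o l)
    (q : (∀ i, M i) → (∀ i, O i) → Λ → ℝ)
    -- q = q^h : weight 1/(K_{m,λ}·L·N) on the support of h, 0 elsewhere
    (hq_pos : ∀ m o l, h m o l →
        q m o l = 1 /
          ((Nat.card {o' : ∀ i, O i // h m o' l} : ℝ) *
           (Nat.card {l' : Λ // ∃ (m' : ∀ i, M i) (o' : ∀ i, O i), h m' o' l'} : ℝ) *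
           (Nat.card {m' : ∀ i, M i // ∃ (o' : ∀ i, O i) (l' : Λ), h m' o' l'} : ℝ)))
    (hq_zero : ∀ m o l, ¬ h m o l → q m o l = 0) :
    -- q is a probability distribution
    (∑ m : ∀ i, M i, ∑ o : ∀ i, O i, ∑ l : Λ, q m o l = 1) ∧
    -- the possibilistic collapse of q is h
    (∀ m o l, 0 < q m o l ↔ h m o l) ∧
    -- Probabilistic Measurement Locality
    (∀ m : ∀ i, M i,
        (∑ o : ∀ i, O i, ∑ l : Λ, q m o l)
          = ∏ i : Fin n, (∑ m' : ∀ j, M j, if m' i = m i then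
              (∑ o : ∀ j, O j, ∑ l : Λ, q m' o l) else 0)) ∧
    -- Probabilistic λ-Independence
    (∀ (m m' : ∀ j, M j) (l : Λ),
        (0 < ∑ o : ∀ j, O j, ∑ l' : Λ, q m o l') →
        (0 < ∑ o : ∀ j, O j, ∑ l' : Λ, q m' o l') →
        (∑ o : ∀ j, O j, q m o l) / (∑ o : ∀ j, O j, ∑ l' : Λ, q m o l')
          = (∑ o : ∀ j, O j, q m' o l) /
            (∑ o : ∀ j, O j, ∑ l' : Λ, q m' o l')) ∧
    -- Probabilistic Locality
    (∀ (m : ∀ j, M j) (o : ∀ j, O j) (l : Λ),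
        (0 < ∑ ob : ∀ j, O j, q m ob l) →
        q m o l / (∑ ob : ∀ j, O j, q m ob l)
          = ∏ i : Fin n,
              ((∑ m' : ∀ j, M j, if m' i = m i then
                  (∑ ob : ∀ j, O j, if ob i = o i then q m' ob l else 0) else 0) /
               (∑ m' : ∀ j, M j, if m' i = m i then
                  (∑ ob : ∀ j, O j, q m' ob l) else 0))) :=
  stmt_17_general M O Λ h hne hML hLI hL q hq_pos hq_zero
end

section
/- Consider the bipartite system type with M_1 = M_2 = O_1 = O_2 = {0,1}, and let p be a probabilistic empirical model with p(m̄) > 0 for every m̄ ∈ M, whose conditional probabilities vanish at the following entries: p((1,0)|(0,0)) = p((0,1)|(0,0)) = 0, p((1,0)|(1,0)) = p((0,1)|(1,0)) = 0, p((1,0)|(0,1)) = p((0,1)|(0,1)) = 0, and p((0,0)|(1,1)) = p((1,1)|(1,1)) = 0. If p satisfies Probabilistic No-Signalling, then every one of the remaining eight conditional probabilities equals 1/2; that is, p(ō|m̄) = 1/2 whenever ō_1 ⊕ ō_2 = m̄_1·m̄_2 (where ⊕ is addition mod 2). -/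
/-!
The zero pattern makes the two outcomes perfectly correlated in the settings (0,0), (0,1), (1,0)
and anticorrelated in (1,1). Hence in a correlated setting both parties see outcome 0 with
probability p(00|m), while in (1,1) the first party does so with probability p(01|11) and the
second with p(10|11). No-signalling links these marginals around the square of settings:
p(01|11) = p(00|10) = p(00|00) = p(00|01) = p(10|11), and as p(01|11) + p(10|11) = 1, every
nonzero entry of the table is 1/2.
-/

open Finset

theorem sum_fin_two_arrow_bool {β : Type*} [AddCommMonoid β] (f : (Fin 2 → Bool) → β) :
    ∑ o, f o = f ![true, true] + f ![true, false] + (f ![false, true] + f ![false, false]) := by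
  rw [← (finTwoArrowEquiv Bool).symm.sum_comp, Fintype.sum_prod_type]
  simp

theorem exists_eq_vec_fin_two {α : Type*} (m : Fin 2 → α) : ∃ a b, m = ![a, b] :=
  ⟨m 0, m 1, ((finTwoArrowEquiv α).symm_apply_apply m).symm⟩

namespace PRBox

def marginal {M ι O : Type*} [DecidableEq ι] [Fintype ι] [Fintype O] [DecidableEq O]
    (q : M → (ι → O) → ℝ) (i : ι) (m : M) (b : O) : ℝ :=
  ∑ o, if o i = b then q m o else 0

-- `q m o` stands for the conditional probability p(o|m); `hzero` is the PR-box zero pattern.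
variable {q : (Fin 2 → Bool) → (Fin 2 → Bool) → ℝ}
  (hzero : ∀ m o, xor (o 0) (o 1) ≠ (m 0 && m 1) → q m o = 0)
include hzero

theorem add_eq_one_of_correlated (hsum : ∀ m, ∑ o, q m o = 1) {m : Fin 2 → Bool}
    (hm : (m 0 && m 1) = false) : q m ![false, false] + q m ![true, true] = 1 := by
  have := hsum m
  rw [sum_fin_two_arrow_bool, hzero m ![true, false] (by simp [hm]),
    hzero m ![false, true] (by simp [hm])] at this
  linarith

theorem add_eq_one_of_anticorrelated (hsum : ∀ m, ∑ o, q m o = 1) :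
    q ![true, true] ![false, true] + q ![true, true] ![true, false] = 1 := by
  have := hsum ![true, true]
  rw [sum_fin_two_arrow_bool, hzero _ ![true, true] (by simp),
    hzero _ ![false, false] (by simp)] at this
  linarith

theorem marginal_of_correlated {m : Fin 2 → Bool} (hm : (m 0 && m 1) = false) (i : Fin 2) :
    marginal q i m false = q m ![false, false] := by
  rw [marginal, sum_fin_two_arrow_bool, hzero m ![true, false] (by simp [hm]),
    hzero m ![false, true] (by simp [hm])]
  fin_cases i <;> simp

theorem marginal_zero_anticorrelated :
    marginal q 0 ![true, true] false = q ![true, true] ![false, true] := by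
  rw [marginal, sum_fin_two_arrow_bool, hzero _ ![false, false] (by simp)]
  simp

theorem marginal_one_anticorrelated :
    marginal q 1 ![true, true] false = q ![true, true] ![true, false] := by
  rw [marginal, sum_fin_two_arrow_bool, hzero _ ![false, false] (by simp)]
  simp

theorem eq_one_half (hsum : ∀ m, ∑ o, q m o = 1)
    (hns : ∀ (i : Fin 2) (m m' : Fin 2 → Bool), m i = m' i → ∀ b : Bool,
      marginal q i m b = marginal q i m' b)
    (m o : Fin 2 → Bool) (h : xor (o 0) (o 1) = (m 0 && m 1)) : q m o = 1 / 2 := by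
  have corr (m : Fin 2 → Bool) (hm : (m 0 && m 1) = false) :=
    marginal_of_correlated hzero hm
  have h10 : q ![true, false] ![false, false] = q ![false, false] ![false, false] := by
    rw [← corr _ rfl 1, ← corr _ rfl 1]
    exact hns 1 _ _ (by rfl) false
  have h01 : q ![false, true] ![false, false] = q ![false, false] ![false, false] := by
    rw [← corr _ rfl 0, ← corr _ rfl 0]
    exact hns 0 _ _ (by rfl) false
  have h11a : q ![true, true] ![false, true] = q ![true, false] ![false, false] := by
    rw [← marginal_zero_anticorrelated hzero, ← corr _ rfl 0]
    exact hns 0 _ _ (by rfl) false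
  have h11b : q ![true, true] ![true, false] = q ![false, true] ![false, false] := by
    rw [← marginal_one_anticorrelated hzero, ← corr _ rfl 1]
    exact hns 1 _ _ (by rfl) false
  have half : q ![false, false] ![false, false] = 1 / 2 := by
    linarith [add_eq_one_of_anticorrelated hzero hsum]
  obtain ⟨a, b, rfl⟩ := exists_eq_vec_fin_two m
  obtain ⟨c, d, rfl⟩ := exists_eq_vec_fin_two o
  cases a <;> cases b <;> cases c <;> cases d <;> simp at h
  all_goals linarith [add_eq_one_of_correlated hzero hsum (m := ![false, false]) rfl,
    add_eq_one_of_correlated hzero hsum (m := ![false, true]) rfl,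
    add_eq_one_of_correlated hzero hsum (m := ![true, false]) rfl]

end PRBox

theorem stmt_19_general (p : (Fin 2 → Bool) → (Fin 2 → Bool) → ℝ)
    -- every measurement combination has positive probability
    (hM : ∀ m : Fin 2 → Bool, 0 < ∑ o : Fin 2 → Bool, p m o)
    -- the eight vanishing conditional probabilities
    (hz1 : p ![false, false] ![true, false] / (∑ o : Fin 2 → Bool, p ![false, false] o) = 0)
    (hz2 : p ![false, false] ![false, true] / (∑ o : Fin 2 → Bool, p ![false, false] o) = 0)
    (hz3 : p ![true, false] ![true, false] / (∑ o : Fin 2 → Bool, p ![true, false] o) = 0)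
    (hz4 : p ![true, false] ![false, true] / (∑ o : Fin 2 → Bool, p ![true, false] o) = 0)
    (hz5 : p ![false, true] ![true, false] / (∑ o : Fin 2 → Bool, p ![false, true] o) = 0)
    (hz6 : p ![false, true] ![false, true] / (∑ o : Fin 2 → Bool, p ![false, true] o) = 0)
    (hz7 : p ![true, true] ![false, false] / (∑ o : Fin 2 → Bool, p ![true, true] o) = 0)
    (hz8 : p ![true, true] ![true, true] / (∑ o : Fin 2 → Bool, p ![true, true] o) = 0)
    -- Probabilistic No-Signalling
    (hPNS : ∀ (i : Fin 2) (m m' : Fin 2 → Bool), m i = m' i → ∀ o : Bool,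
        (0 < ∑ ob : Fin 2 → Bool, p m ob) →
        (0 < ∑ ob : Fin 2 → Bool, p m' ob) →
        (∑ ob : Fin 2 → Bool, if ob i = o then p m ob else 0) /
            (∑ ob : Fin 2 → Bool, p m ob)
          = (∑ ob : Fin 2 → Bool, if ob i = o then p m' ob else 0) /
            (∑ ob : Fin 2 → Bool, p m' ob)) :
    -- all remaining conditionals are 1/2
    ∀ m o : Fin 2 → Bool, xor (o 0) (o 1) = (m 0 && m 1) →
      p m o / (∑ ob : Fin 2 → Bool, p m ob) = 1 / 2 := by
  refine PRBox.eq_one_half (q := fun m o => p m o / ∑ ob, p m ob) ?_ (fun m => ?_) ?_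
  · intro m o hmo
    obtain ⟨a, b, rfl⟩ := exists_eq_vec_fin_two m
    obtain ⟨c, d, rfl⟩ := exists_eq_vec_fin_two o
    cases a <;> cases b <;> cases c <;> cases d <;> simp at hmo <;> assumption
  · rw [← sum_div, div_self (hM m).ne']
  · intro i m m' hi b
    simpa only [PRBox.marginal, ite_div, zero_div, sum_div] using
      hPNS i m m' hi b (hM m) (hM m')

/-- Any no-signalling probabilistic model of PR-box type (bipartite,
two binary measurements and binary outcomes, every measurement possible,
with the PR-box zero pattern of conditional probabilities) must have all
remaining conditional probabilities equal to 1/2. -/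
theorem stmt_19 (p : (Fin 2 → Bool) → (Fin 2 → Bool) → ℝ)
    -- p is a probability distribution
    (hpos : ∀ m o, 0 ≤ p m o)
    (hsum : ∑ m : Fin 2 → Bool, ∑ o : Fin 2 → Bool, p m o = 1)
    -- every measurement combination has positive probability
    (hM : ∀ m : Fin 2 → Bool, 0 < ∑ o : Fin 2 → Bool, p m o)
    -- the eight vanishing conditional probabilities
    (hz1 : p ![false, false] ![true, false] / (∑ o : Fin 2 → Bool, p ![false, false] o) = 0)
    (hz2 : p ![false, false] ![false, true] / (∑ o : Fin 2 → Bool, p ![false, false] o) = 0)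
    (hz3 : p ![true, false] ![true, false] / (∑ o : Fin 2 → Bool, p ![true, false] o) = 0)
    (hz4 : p ![true, false] ![false, true] / (∑ o : Fin 2 → Bool, p ![true, false] o) = 0)
    (hz5 : p ![false, true] ![true, false] / (∑ o : Fin 2 → Bool, p ![false, true] o) = 0)
    (hz6 : p ![false, true] ![false, true] / (∑ o : Fin 2 → Bool, p ![false, true] o) = 0)
    (hz7 : p ![true, true] ![false, false] / (∑ o : Fin 2 → Bool, p ![true, true] o) = 0)
    (hz8 : p ![true, true] ![true, true] / (∑ o : Fin 2 → Bool, p ![true, true] o) = 0)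
    -- Probabilistic No-Signalling
    (hPNS : ∀ (i : Fin 2) (m m' : Fin 2 → Bool), m i = m' i → ∀ o : Bool,
        (0 < ∑ ob : Fin 2 → Bool, p m ob) →
        (0 < ∑ ob : Fin 2 → Bool, p m' ob) →
        (∑ ob : Fin 2 → Bool, if ob i = o then p m ob else 0) /
            (∑ ob : Fin 2 → Bool, p m ob)
          = (∑ ob : Fin 2 → Bool, if ob i = o then p m' ob else 0) /
            (∑ ob : Fin 2 → Bool, p m' ob)) :
    -- all remaining conditionals are 1/2
    ∀ m o : Fin 2 → Bool, xor (o 0) (o 1) = (m 0 && m 1) →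
      p m o / (∑ ob : Fin 2 → Bool, p m ob) = 1 / 2 :=
  stmt_19_general p hM hz1 hz2 hz3 hz4 hz5 hz6 hz7 hz8 hPNS
end
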